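/- arXiv:math/0512451 — 2 statements merged into one kernel-verified Lean document; each statement's English description precedes it below -/
import Mathlib

section
/- Assume Γ contains infinitely many distinct sets, conditions (w), (a) and (1.2) hold, and condition (a₂₂) holds with parameter m: no Ω_k with k > m is contained in the union of a finite collection of the other sets Ω_j ∈ Γ. Then for each n > m there exists a (possibly nonlinear) extension operator T_n, assigning to each w ∈ S_n⁰(Γ,W) a function T_n w on Ω agreeing with w on G_n, such that: (1) T_n maps S_n⁰(Γ,W) into S(Γ,W); (2) T_n maps extreme points of S_n⁰(Γ,W) to extreme points of S(Γ,W); (3) for every w' ∈ W', sup_{w∈S_n⁰(Γ,W)} ⟨T₀w − T_n w, w'⟩ → 0 as n → ∞. -/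
open Filter

namespace Birkhoff

variable {Ω ι : Type*}

/-- Adjacency in the associated graph `G`: two distinct vertices are adjacent
iff they lie in a common set `Ω_k`. -/
def Adj (Γ : ι → Set Ω) (g g' : Ω) : Prop :=
  g ≠ g' ∧ ∃ k, g ∈ Γ k ∧ g' ∈ Γ k

/-- `Γ(g)`, the set of indices `k` with `g ∈ Ω_k`. -/
def idx (Γ : ι → Set Ω) (g : Ω) : Set ι :=
  {k | g ∈ Γ k}

/-- Condition (a): every point lies in only finitely many of the sets. -/
def CondA (Γ : ι → Set Ω) : Prop :=
  ∀ g : Ω, (idx Γ g).Finite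

/-- Condition (1.2): `Ω_k \ Ω_j ≠ ∅` for all `j ≠ k`. -/
def Cond12 (Γ : ι → Set Ω) : Prop :=
  ∀ j k : ι, j ≠ k → (Γ k \ Γ j).Nonempty

/-- The set `S(Γ)` of nonnegative functions whose sum over each `Ω_k` is `1`. -/
def SGamma (Γ : ι → Set Ω) : Set (Ω → ℝ) :=
  {w | (∀ g : Ω, 0 ≤ w g) ∧ ∀ k : ι, HasSum (fun g : Γ k => w g) 1}

/-- The set `S⁰(Γ)` of nonnegative functions whose sum over each `Ω_k` is `≤ 1`. -/
def S0Gamma (Γ : ι → Set Ω) : Set (Ω → ℝ) :=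
  {w | (∀ g : Ω, 0 ≤ w g) ∧ ∀ k : ι, ∃ s : ℝ, s ≤ 1 ∧ HasSum (fun g : Γ k => w g) s}

/-- The set `P(Γ)` of `{0,1}`-valued functions in `S(Γ)`. -/
def PGamma (Γ : ι → Set Ω) : Set (Ω → ℝ) :=
  {w | w ∈ SGamma Γ ∧ ∀ g : Ω, w g = 0 ∨ w g = 1}

/-- The set `P⁰(Γ)` of `{0,1}`-valued functions whose sum over each `Ω_k` is `≤ 1`. -/
def P0Gamma (Γ : ι → Set Ω) : Set (Ω → ℝ) :=
  {w | (∀ g : Ω, w g = 0 ∨ w g = 1) ∧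
    ∀ k : ι, ∃ s : ℝ, s ≤ 1 ∧ HasSum (fun g : Γ k => w g) s}

/-- Condition (w): `W` is solid. -/
def CondW (W : Set (Ω → ℝ)) : Prop :=
  ∀ w ∈ W, ∀ w' : Ω → ℝ, (∀ g : Ω, |w' g| ≤ |w g|) → w' ∈ W

/-- The list of edges of a path, as unordered pairs. -/
def edgeList (l : List Ω) : List (Sym2 Ω) :=
  (l.zip l.tail).map fun p => s(p.1, p.2)

/-- A path in the associated graph: nonempty list of vertices, consecutive
vertices adjacent, and all edges distinct. -/
def IsPathList (Γ : ι → Set Ω) (l : List Ω) : Prop :=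
  l ≠ [] ∧ l.Chain' (Adj Γ) ∧ (edgeList l).Nodup

/-- Each vertex of `l` is adjacent to at most two other vertices of `l`. -/
def SimpleOn (Γ : ι → Set Ω) (l : List Ω) : Prop :=
  ∀ g ∈ l, ({g' : Ω | g' ∈ l ∧ Adj Γ g g'}).ncard ≤ 2

/-- No set `Ω_k` contains more than two vertices of `l`. -/
def PrimitiveOn (Γ : ι → Set Ω) (l : List Ω) : Prop :=
  ∀ k : ι, ({g : Ω | g ∈ l ∧ g ∈ Γ k}).ncard ≤ 2

def IsSimplePath (Γ : ι → Set Ω) (l : List Ω) : Prop :=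
  IsPathList Γ l ∧ SimpleOn Γ l

def IsPrimitivePath (Γ : ι → Set Ω) (l : List Ω) : Prop :=
  IsSimplePath Γ l ∧ PrimitiveOn Γ l

/-- A (simple) cycle `(g₁, …, g_m, g₁)`, encoded as the list of its `m + 1`
consecutive vertices (first vertex repeated at the end). -/
def IsCycle (Γ : ι → Set Ω) (l : List Ω) : Prop :=
  IsPathList Γ l ∧ l.head? = l.getLast? ∧ 2 ≤ l.length ∧ l.dropLast.Nodup

def IsSimpleCycle (Γ : ι → Set Ω) (l : List Ω) : Prop :=
  IsCycle Γ l ∧ SimpleOn Γ l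

def IsPrimitiveCycle (Γ : ι → Set Ω) (l : List Ω) : Prop :=
  IsSimpleCycle Γ l ∧ PrimitiveOn Γ l

/-- The cycle `(g₁, …, g_m, g₁)`, a list with `m + 1` entries, is odd iff `m` is odd. -/
def OddCycleList (l : List Ω) : Prop :=
  Odd (l.length - 1)

/-- `g'` can be reached from `g` by a path all of whose vertices lie in `A`. -/
def ReachIn (Γ : ι → Set Ω) (A : Set Ω) (g g' : Ω) : Prop :=
  ∃ l : List Ω, l.Chain' (Adj Γ) ∧ (∀ x ∈ l, x ∈ A) ∧
    l.head? = some g ∧ l.getLast? = some g'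

/-- The connected component of `g` in the subgraph of `G` induced on `A`. -/
def component (Γ : ι → Set Ω) (A : Set Ω) (g : Ω) : Set Ω :=
  {g' | ReachIn Γ A g g'}

/-- The subgraph induced on `A` is connected. -/
def ConnectedOn (Γ : ι → Set Ω) (A : Set Ω) : Prop :=
  ∀ g ∈ A, ∀ g' ∈ A, ReachIn Γ A g g'

/-- `G_n := ⋃_{k ≤ n} Ω_k`. -/
def Gn (Γ : ℕ → Set Ω) (n : ℕ) : Set Ω :=
  ⋃ k ∈ {k : ℕ | k ≤ n}, Γ k

/-- The space `W'` of functions pairing summably with every element of `W`. -/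
def Wdual (W : Set (Ω → ℝ)) : Set (Ω → ℝ) :=
  {w' | ∀ w ∈ W, Summable fun g : Ω => |w g * w' g|}

/-- `S_n⁰(Γ, W)`: (extensions by zero of) nonnegative functions on `G_n` whose
sums over `Ω_k`, `k ≤ n`, equal `1`, whose sums over `Ω_k ∩ G_n`, `k > n`, are
`≤ 1`, and which belong to `W`. -/
def Sn0 (Γ : ℕ → Set Ω) (W : Set (Ω → ℝ)) (n : ℕ) : Set (Ω → ℝ) :=
  {w | (∀ g : Ω, 0 ≤ w g) ∧ (∀ g ∉ Gn Γ n, w g = 0) ∧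
    (∀ k ≤ n, HasSum (fun g : Γ k => w g) 1) ∧
    (∀ k > n, ∃ s : ℝ, s ≤ 1 ∧ HasSum (fun g : Γ k => w g) s) ∧ w ∈ W}


namespace BirkhoffAux

open Classical in
/-- Sum of a single-point `if` function over a subtype. -/
lemma hasSum_single_subtype {Ω : Type*} (s : Set Ω) (x : Ω) (a : ℝ) :
    HasSum (fun g : s => if x = ↑g then a else 0) (if x ∈ s then a else 0) := by
  classical
  by_cases hx : x ∈ s
  · simp only [if_pos hx]
    have : (fun g : s => if x = ↑g then a else 0) =
        (fun g : s => if g = (⟨x, hx⟩ : s) then a else 0) := by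
      funext g
      congr 1
      simp only [eq_iff_iff]
      constructor
      · intro h; exact Subtype.ext h.symm
      · intro h; rw [h]
    rw [this]
    exact hasSum_ite_eq _ _
  · simp only [if_neg hx]
    have : (fun g : s => if x = ↑g then a else 0) = fun _ => (0:ℝ) := by
      funext g
      rw [if_neg]
      intro h; exact hx (h ▸ g.2)
    rw [this]
    exact hasSum_zero

/-- Nonnegative summable functions have finite tails in the strong sense. -/
lemma exists_tail_finset {Ω : Type*} {w : Ω → ℝ} (hs : Summable w) (hnn : ∀ g, 0 ≤ w g)
    {ε : ℝ} (hε : 0 < ε) :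
    ∃ F : Finset Ω, ∀ s : Set Ω, (∀ g ∈ F, g ∉ s) → ∑' g : s, w g ≤ ε := by
  classical
  have hv := summable_iff_vanishing.mp hs (Metric.ball 0 ε) (Metric.ball_mem_nhds 0 hε)
  obtain ⟨F, hF⟩ := hv
  refine ⟨F, fun s hsF => ?_⟩
  have hsub : Summable (w ∘ (Subtype.val : s → Ω)) := hs.subtype s
  refine Summable.tsum_le_of_sum_le hsub (fun t => ?_)
  have hdisj : Disjoint (t.image Subtype.val) F := by
    rw [Finset.disjoint_left]
    intro g hg hgF
    obtain ⟨g', _, rfl⟩ := Finset.mem_image.mp hg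
    exact hsF _ hgF g'.2
  have := hF (t.image Subtype.val) hdisj
  rw [Metric.mem_ball, Real.dist_eq, sub_zero] at this
  have hle : ∑ i ∈ t, w ↑i = ∑ g ∈ t.image Subtype.val, w g := by
    rw [Finset.sum_image]
    intro a _ b _ hab; exact Subtype.ext hab
  rw [hle]
  calc ∑ g ∈ t.image Subtype.val, w g ≤ |∑ g ∈ t.image Subtype.val, w g| := le_abs_self _
  _ ≤ ε := le_of_lt this

end BirkhoffAux
/-! ### The extension construction -/

/-- Context for the extension construction: all data and hypotheses needed. -/
structure Ctx (Ω : Type*) where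
  Γ : ℕ → Set Ω
  ha : CondA Γ
  m : ℕ
  n : ℕ
  ha22 : ∀ k > m, ∀ K : Finset ℕ, k ∉ K → ¬ Γ k ⊆ ⋃ j ∈ K, Γ j
  hmn : m < n
  w : Ω → ℝ
  hw0 : ∀ g, 0 ≤ w g
  hwG : ∀ g ∉ Gn Γ n, w g = 0
  hσ1 : ∀ i ≤ n, HasSum (fun g : Γ i => w g) 1
  hσle : ∀ i : ℕ, (∑' g : Γ i, w g) ≤ 1
  hSum : Summable w
  D : Finset ℕ
  hD : ∀ i : ℕ, 1/2 < (∑' g : Γ i, w g) → i ∈ D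

namespace Ctx

variable {Ω : Type*} (c : Ctx Ω)

noncomputable def sg (i : ℕ) : ℝ := ∑' g : c.Γ i, c.w g

lemma sg_nonneg (i : ℕ) : 0 ≤ c.sg i :=
  tsum_nonneg (fun g => c.hw0 g)

lemma sg_le (i : ℕ) : c.sg i ≤ 1 := c.hσle i

lemma sg_eq_one {i : ℕ} (hi : i ≤ c.n) : c.sg i = 1 := (c.hσ1 i hi).tsum_eq

lemma sg_summable (i : ℕ) : Summable (fun g : c.Γ i => c.w g) :=
  c.hSum.subtype _

lemma sg_hasSum (i : ℕ) : HasSum (fun g : c.Γ i => c.w g) (c.sg i) :=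
  (c.sg_summable i).hasSum

lemma sg_half {i : ℕ} (hi : i ∉ c.D) : c.sg i ≤ 1/2 := by
  by_contra h
  exact hi (c.hD i (lt_of_not_ge h))

noncomputable def ixF (g : Ω) : Finset ℕ := (c.ha g).toFinset

lemma mem_ixF {g : Ω} {j : ℕ} : j ∈ c.ixF g ↔ g ∈ c.Γ j := by
  simp [ixF, idx, Set.Finite.mem_toFinset]

lemma pick_ex {l : ℕ} (hl : c.m < l) (K : Finset ℕ) :
    ∃ g, g ∈ c.Γ l ∧ ∀ j ∈ K, j ≠ l → g ∉ c.Γ j := by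
  have h := c.ha22 l hl (K.erase l) (by simp)
  rw [Set.not_subset] at h
  obtain ⟨g, hg, hg2⟩ := h
  refine ⟨g, hg, fun j hj hne hmem => hg2 ?_⟩
  exact Set.mem_biUnion (by exact_mod_cast Finset.mem_erase.mpr ⟨hne, hj⟩) hmem

noncomputable def pickP {l : ℕ} (hl : c.m < l) (K : Finset ℕ) : Ω :=
  (c.pick_ex hl K).choose

lemma pickP_mem {l : ℕ} (hl : c.m < l) (K : Finset ℕ) : c.pickP hl K ∈ c.Γ l :=
  (c.pick_ex hl K).choose_spec.1

lemma pickP_avoid {l : ℕ} (hl : c.m < l) (K : Finset ℕ) :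
    ∀ j ∈ K, j ≠ l → c.pickP hl K ∉ c.Γ j :=
  (c.pick_ex hl K).choose_spec.2

open Classical in
/-- Total mass of entries of `L` lying in `Γ i`. -/
noncomputable def mTot (L : List (Ω × ℝ × Fin 3)) (i : ℕ) : ℝ :=
  (L.map fun e => if e.1 ∈ c.Γ i then e.2.1 else 0).sum

open Classical in
/-- Number of entries of `L` lying in `Γ i`. -/
noncomputable def cnt (L : List (Ω × ℝ × Fin 3)) (i : ℕ) : ℕ :=
  (L.filter fun e => decide (e.1 ∈ c.Γ i)).length

open Classical in
/-- Color of the (unique) entry of `L` lying in `Γ l`, or `0`. -/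
noncomputable def cpC (L : List (Ω × ℝ × Fin 3)) (l : ℕ) : Fin 3 :=
  ((L.filterMap fun e => if e.1 ∈ c.Γ l then some e.2.2 else none).head?).getD 0

/-- Fold of the index sets of the entries of `L`. -/
noncomputable def ixU (L : List (Ω × ℝ × Fin 3)) : Finset ℕ :=
  (L.map fun e => c.ixF e.1).foldr (· ∪ ·) ∅

lemma ixF_subset_ixU {L : List (Ω × ℝ × Fin 3)} {e} (he : e ∈ L) :
    c.ixF e.1 ⊆ c.ixU L := by
  induction L with
  | nil => cases he
  | cons f L ih =>
    rcases List.mem_cons.mp he with rfl | he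
    · exact Finset.subset_union_left
    · exact (ih he).trans Finset.subset_union_right

/-- The avoidance set at step `t`, given the current entries `L`. -/
noncomputable def Kb (L : List (Ω × ℝ × Fin 3)) (t : ℕ) : Finset ℕ :=
  Finset.range (c.n+1+t) ∪ c.ixU L ∪ c.D

lemma lt_step (t : ℕ) : c.m < c.n+1+t := lt_of_lt_of_le c.hmn (by omega)

noncomputable def xP (t : ℕ) (L : List (Ω × ℝ × Fin 3)) : Ω :=
  c.pickP (c.lt_step t) (c.Kb L t)

noncomputable def dV (t : ℕ) (L : List (Ω × ℝ × Fin 3)) : ℝ :=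
  1 - c.sg (c.n+1+t) - c.mTot L (c.n+1+t)

noncomputable def bV (t : ℕ) (L : List (Ω × ℝ × Fin 3)) : ℝ :=
  (insert (0:ℝ) (((c.ixF (c.xP t L)).erase (c.n+1+t)).image c.sg)).max'
    (Finset.insert_nonempty _ _)

noncomputable def aV (t : ℕ) (L : List (Ω × ℝ × Fin 3)) : ℝ :=
  min (c.dV t L) (1 - c.bV t L)

noncomputable def eV (t : ℕ) (L : List (Ω × ℝ × Fin 3)) : ℝ :=
  c.dV t L - c.aV t L

noncomputable def yP (t : ℕ) (L : List (Ω × ℝ × Fin 3)) : Ω :=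
  c.pickP (c.lt_step t) (c.Kb L t ∪ c.ixF (c.xP t L))

noncomputable def newE (t : ℕ) (L : List (Ω × ℝ × Fin 3)) : List (Ω × ℝ × Fin 3) :=
  [(c.xP t L, c.aV t L, c.cpC L (c.n+1+t) + 1),
   (c.yP t L, c.eV t L, c.cpC L (c.n+1+t) + 2)]

noncomputable def LL : ℕ → List (Ω × ℝ × Fin 3)
  | 0 => []
  | (t+1) => LL t ++ c.newE t (LL t)

/-- The `x`-point of step `t`. -/
noncomputable def X (t : ℕ) : Ω := c.xP t (c.LL t)
/-- The `y`-point of step `t`. -/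
noncomputable def Y (t : ℕ) : Ω := c.yP t (c.LL t)
noncomputable def A (t : ℕ) : ℝ := c.aV t (c.LL t)
noncomputable def Ev (t : ℕ) : ℝ := c.eV t (c.LL t)
noncomputable def C1 (t : ℕ) : Fin 3 := c.cpC (c.LL t) (c.n+1+t) + 1
noncomputable def C2 (t : ℕ) : Fin 3 := c.cpC (c.LL t) (c.n+1+t) + 2

lemma LL_succ (t : ℕ) :
    c.LL (t+1) = c.LL t ++ [(c.X t, c.A t, c.C1 t), (c.Y t, c.Ev t, c.C2 t)] := by
  rw [LL]; rfl

end Ctx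
namespace Ctx

variable {Ω : Type*} (c : Ctx Ω)

/-! #### Specification of the chosen points -/

lemma X_mem (t : ℕ) : c.X t ∈ c.Γ (c.n+1+t) := c.pickP_mem (c.lt_step _) _

lemma Y_mem (t : ℕ) : c.Y t ∈ c.Γ (c.n+1+t) := c.pickP_mem (c.lt_step _) _

lemma X_avoid {t j : ℕ} (hj : j ∈ c.Kb (c.LL t) t) (hne : j ≠ c.n+1+t) :
    c.X t ∉ c.Γ j := c.pickP_avoid (c.lt_step _) _ j hj hne

lemma Y_avoid {t j : ℕ} (hj : j ∈ c.Kb (c.LL t) t ∪ c.ixF (c.X t)) (hne : j ≠ c.n+1+t) :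
    c.Y t ∉ c.Γ j := c.pickP_avoid (c.lt_step _) _ j hj hne

lemma X_not_lt {t j : ℕ} (hj : j < c.n+1+t) : c.X t ∉ c.Γ j :=
  c.X_avoid (Finset.mem_union_left _ (Finset.mem_union_left _ (Finset.mem_range.mpr hj)))
    (Nat.ne_of_lt hj)

lemma Y_not_lt {t j : ℕ} (hj : j < c.n+1+t) : c.Y t ∉ c.Γ j :=
  c.Y_avoid (Finset.mem_union_left _
    (Finset.mem_union_left _ (Finset.mem_union_left _ (Finset.mem_range.mpr hj))))
    (Nat.ne_of_lt hj)

lemma X_fresh {t i : ℕ} {e} (he : e ∈ c.LL t) (hei : e.1 ∈ c.Γ i) (hne : i ≠ c.n+1+t) :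
    c.X t ∉ c.Γ i :=
  c.X_avoid (Finset.mem_union_left _ (Finset.mem_union_right _
    (c.ixF_subset_ixU he (c.mem_ixF.mpr hei)))) hne

lemma Y_fresh {t i : ℕ} {e} (he : e ∈ c.LL t) (hei : e.1 ∈ c.Γ i) (hne : i ≠ c.n+1+t) :
    c.Y t ∉ c.Γ i :=
  c.Y_avoid (Finset.mem_union_left _ (Finset.mem_union_left _ (Finset.mem_union_right _
    (c.ixF_subset_ixU he (c.mem_ixF.mpr hei))))) hne

lemma Y_not_ixX {t i : ℕ} (hi : c.X t ∈ c.Γ i) (hne : i ≠ c.n+1+t) :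
    c.Y t ∉ c.Γ i :=
  c.Y_avoid (Finset.mem_union_right _ (c.mem_ixF.mpr hi)) hne

lemma X_not_D {t i : ℕ} (hi : i ∈ c.D) (hne : i ≠ c.n+1+t) : c.X t ∉ c.Γ i :=
  c.X_avoid (Finset.mem_union_right _ hi) hne

lemma Y_not_D {t i : ℕ} (hi : i ∈ c.D) (hne : i ≠ c.n+1+t) : c.Y t ∉ c.Γ i :=
  c.Y_avoid (Finset.mem_union_left _ (Finset.mem_union_right _ hi)) hne

lemma sg_half_of_X {t i : ℕ} (hi : c.X t ∈ c.Γ i) (hne : i ≠ c.n+1+t) : c.sg i ≤ 1/2 :=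
  c.sg_half (fun hD => c.X_not_D hD hne hi)

lemma sg_half_of_Y {t i : ℕ} (hi : c.Y t ∈ c.Γ i) (hne : i ≠ c.n+1+t) : c.sg i ≤ 1/2 :=
  c.sg_half (fun hD => c.Y_not_D hD hne hi)

/-! #### List bookkeeping -/

lemma mTot_append (L L' : List (Ω × ℝ × Fin 3)) (i : ℕ) :
    c.mTot (L ++ L') i = c.mTot L i + c.mTot L' i := by
  simp [mTot]

lemma mTot_nil (i : ℕ) : c.mTot [] i = 0 := rfl

open Classical in
lemma mTot_pair (x y : Ω) (a e : ℝ) (c1 c2 : Fin 3) (i : ℕ) :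
    c.mTot [(x, a, c1), (y, e, c2)] i =
      (if x ∈ c.Γ i then a else 0) + (if y ∈ c.Γ i then e else 0) := by
  simp [mTot]

lemma mTot_eq_zero {L : List (Ω × ℝ × Fin 3)} {i : ℕ}
    (h : ∀ e ∈ L, e.1 ∉ c.Γ i) : c.mTot L i = 0 := by
  classical
  unfold mTot
  rw [List.sum_eq_zero]
  intro z hz
  obtain ⟨e, he, rfl⟩ := List.mem_map.mp hz
  rw [if_neg (h e he)]

lemma mTot_nonneg {L : List (Ω × ℝ × Fin 3)} (h : ∀ e ∈ L, 0 ≤ e.2.1) (i : ℕ) :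
    0 ≤ c.mTot L i := by
  classical
  unfold mTot
  apply List.sum_nonneg
  intro z hz
  obtain ⟨e, he, rfl⟩ := List.mem_map.mp hz
  by_cases hm : e.1 ∈ c.Γ i
  · rw [if_pos hm]; exact h e he
  · rw [if_neg hm]

lemma cnt_append (L L' : List (Ω × ℝ × Fin 3)) (i : ℕ) :
    c.cnt (L ++ L') i = c.cnt L i + c.cnt L' i := by
  classical
  simp [cnt, List.filter_append]

lemma cnt_eq_zero {L : List (Ω × ℝ × Fin 3)} {i : ℕ}
    (h : ∀ e ∈ L, e.1 ∉ c.Γ i) : c.cnt L i = 0 := by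
  classical
  simp only [cnt, List.length_eq_zero_iff, List.filter_eq_nil_iff]
  intro e he
  simp [h e he]

lemma cnt_zero_iff {L : List (Ω × ℝ × Fin 3)} {i : ℕ} :
    c.cnt L i = 0 ↔ ∀ e ∈ L, e.1 ∉ c.Γ i := by
  classical
  simp only [cnt, List.length_eq_zero_iff, List.filter_eq_nil_iff]
  constructor
  · intro h e he hm
    have := h e he
    simp [hm] at this
  · intro h e he
    simp [h e he]

open Classical in
lemma cp_spec {L : List (Ω × ℝ × Fin 3)} {l : ℕ} (h : c.cnt L l ≤ 1) :
    ∀ e ∈ L, e.1 ∈ c.Γ l → e.2.2 = c.cpC L l := by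
  classical
  induction L with
  | nil => intro e he; cases he
  | cons f L ih =>
    intro e he hel
    by_cases hf : f.1 ∈ c.Γ l
    · have hcnt : c.cnt (f :: L) l = c.cnt L l + 1 := by
        simp [cnt, List.filter_cons, hf]
      have hL0 : c.cnt L l = 0 := by omega
      have hnone : ∀ e' ∈ L, e'.1 ∉ c.Γ l := c.cnt_zero_iff.mp hL0
      rcases List.mem_cons.mp he with rfl | he'
      · simp [cpC, List.filterMap_cons, hf]
      · exact absurd hel (hnone e he')
    · have hcnt : c.cnt (f :: L) l = c.cnt L l := by
        simp [cnt, List.filter_cons, hf]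
      have hcp : c.cpC (f :: L) l = c.cpC L l := by
        simp [cpC, List.filterMap_cons, hf]
      rcases List.mem_cons.mp he with rfl | he'
      · exact absurd hel hf
      · rw [hcp]; exact ih (by omega) e he' hel

end Ctx
namespace Ctx

variable {Ω : Type*} (c : Ctx Ω)

/-- The invariant maintained by the construction. -/
structure Inv (t : ℕ) : Prop where
  mass0 : ∀ e ∈ c.LL t, 0 ≤ e.2.1
  mass1 : ∀ e ∈ c.LL t, e.2.1 ≤ 1
  proc : ∀ i, c.n < i → i < c.n+1+t → c.sg i + c.mTot (c.LL t) i = 1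
  unproc : ∀ i, c.n+1+t ≤ i → c.sg i + c.mTot (c.LL t) i ≤ 1
  cnt1 : ∀ i, c.n+1+t ≤ i → c.cnt (c.LL t) i ≤ 1
  colors : (c.LL t).Pairwise
    (fun e e' => ∀ i, e.1 ∈ c.Γ i → e'.1 ∈ c.Γ i → e.2.2 ≠ e'.2.2)

lemma inv_zero : c.Inv 0 := by
  have hnil : c.LL 0 = [] := rfl
  constructor
  · intro e he; rw [hnil] at he; cases he
  · intro e he; rw [hnil] at he; cases he
  · intro i h1 h2; omega
  · intro i _
    rw [hnil, c.mTot_nil, add_zero]; exact c.sg_le i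
  · intro i _
    rw [hnil]; simp [cnt]
  · rw [hnil]; exact List.Pairwise.nil

/-- Basic facts about the quantities of step `t`, given the invariant. -/
lemma step_facts {t : ℕ} (hI : c.Inv t) :
    0 ≤ c.dV t (c.LL t) ∧ c.dV t (c.LL t) ≤ 1 ∧
    0 ≤ c.bV t (c.LL t) ∧ c.bV t (c.LL t) ≤ 1/2 ∧
    0 ≤ c.A t ∧ c.A t ≤ 1 ∧ c.A t ≤ c.dV t (c.LL t) ∧
    0 ≤ c.Ev t ∧ c.Ev t ≤ c.bV t (c.LL t) ∧
    (∀ i ∈ (c.ixF (c.X t)).erase (c.n+1+t), c.sg i ≤ c.bV t (c.LL t)) := by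
  have hδ0 : 0 ≤ c.dV t (c.LL t) := by
    have := hI.unproc (c.n+1+t) le_rfl
    unfold dV; linarith
  have hδ1 : c.dV t (c.LL t) ≤ 1 := by
    have h1 := c.sg_nonneg (c.n+1+t)
    have h2 := c.mTot_nonneg hI.mass0 (c.n+1+t)
    unfold dV; linarith
  have hb0 : 0 ≤ c.bV t (c.LL t) :=
    Finset.le_max' _ _ (Finset.mem_insert_self _ _)
  have hbh : c.bV t (c.LL t) ≤ 1/2 := by
    apply Finset.max'_le
    intro z hz
    rcases Finset.mem_insert.mp hz with rfl | hz
    · norm_num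
    · obtain ⟨i, hi, rfl⟩ := Finset.mem_image.mp hz
      have hi' := Finset.mem_erase.mp hi
      exact c.sg_half_of_X (c.mem_ixF.mp hi'.2) hi'.1
  have ha0 : 0 ≤ c.A t := le_min hδ0 (by linarith)
  have haδ : c.A t ≤ c.dV t (c.LL t) := min_le_left _ _
  have ha1 : c.A t ≤ 1 := le_trans haδ hδ1
  have he0 : 0 ≤ c.Ev t := by
    have h' : c.A t ≤ c.dV t (c.LL t) := haδ
    simp only [A] at h'
    simp only [Ev, eV]
    linarith
  have heb : c.Ev t ≤ c.bV t (c.LL t) := by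
    simp only [Ev, eV, A, aV]
    rcases min_cases (c.dV t (c.LL t)) (1 - c.bV t (c.LL t)) with ⟨hm, _⟩ | ⟨hm, _⟩ <;>
      rw [hm] <;> linarith
  have hge : ∀ i ∈ (c.ixF (c.X t)).erase (c.n+1+t), c.sg i ≤ c.bV t (c.LL t) := by
    intro i hi
    exact Finset.le_max' _ _ (Finset.mem_insert_of_mem (Finset.mem_image_of_mem _ hi))
  exact ⟨hδ0, hδ1, hb0, hbh, ha0, ha1, haδ, he0, heb, hge⟩

lemma inv_succ {t : ℕ} (hI : c.Inv t) : c.Inv (t+1) := by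
  classical
  obtain ⟨hδ0, hδ1, hb0, hbh, ha0, ha1, haδ, he0, heb, hge⟩ := c.step_facts hI
  set l := c.n+1+t with hl
  have hXl : c.X t ∈ c.Γ l := c.X_mem t
  have hYl : c.Y t ∈ c.Γ l := c.Y_mem t
  have hae : c.A t + c.Ev t = c.dV t (c.LL t) := by unfold Ev eV A; ring
  have hmX : ∀ i, c.X t ∈ c.Γ i → i ≠ l → c.mTot (c.LL t) i = 0 := by
    intro i hi hne
    exact c.mTot_eq_zero (fun e he hei => c.X_fresh he hei hne hi)
  have hmY : ∀ i, c.Y t ∈ c.Γ i → i ≠ l → c.mTot (c.LL t) i = 0 := by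
    intro i hi hne
    exact c.mTot_eq_zero (fun e he hei => c.Y_fresh he hei hne hi)
  have hcX : ∀ i, c.X t ∈ c.Γ i → i ≠ l → c.cnt (c.LL t) i = 0 := by
    intro i hi hne
    exact c.cnt_eq_zero (fun e he hei => c.X_fresh he hei hne hi)
  have hcY : ∀ i, c.Y t ∈ c.Γ i → i ≠ l → c.cnt (c.LL t) i = 0 := by
    intro i hi hne
    exact c.cnt_eq_zero (fun e he hei => c.Y_fresh he hei hne hi)
  have hmTsucc : ∀ i, c.mTot (c.LL (t+1)) i = c.mTot (c.LL t) i +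
      ((if c.X t ∈ c.Γ i then c.A t else 0) + (if c.Y t ∈ c.Γ i then c.Ev t else 0)) := by
    intro i
    rw [c.LL_succ, c.mTot_append, c.mTot_pair]
  have hcsucc : ∀ i, c.cnt (c.LL (t+1)) i = c.cnt (c.LL t) i +
      ((if c.X t ∈ c.Γ i then 1 else 0) + (if c.Y t ∈ c.Γ i then 1 else 0)) := by
    intro i
    rw [c.LL_succ, c.cnt_append]
    congr 1
    simp only [cnt, List.countP_cons, List.countP_nil]
    by_cases h1 : c.X t ∈ c.Γ i <;> by_cases h2 : c.Y t ∈ c.Γ i <;>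
      simp [h1, h2]
  have hmem_succ : ∀ e, e ∈ c.LL (t+1) ↔
      e ∈ c.LL t ∨ e = (c.X t, c.A t, c.C1 t) ∨ e = (c.Y t, c.Ev t, c.C2 t) := by
    intro e
    rw [c.LL_succ]
    simp
  constructor
  · intro e he
    rcases (hmem_succ e).mp he with he | rfl | rfl
    · exact hI.mass0 e he
    · exact ha0
    · exact he0
  · intro e he
    rcases (hmem_succ e).mp he with he | rfl | rfl
    · exact hI.mass1 e he
    · exact ha1
    · exact le_trans heb hbh |>.trans (by norm_num)
  · intro i hni hilt
    rw [hmTsucc]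
    by_cases hil : i = l
    · rw [hil, if_pos hXl, if_pos hYl]
      have hdv : c.dV t (c.LL t) = 1 - c.sg l - c.mTot (c.LL t) l := rfl
      linarith [hae]
    · have hilt' : i < l := by omega
      rw [if_neg (fun h => c.X_not_lt hilt' h), if_neg (fun h => c.Y_not_lt hilt' h)]
      rw [add_zero, add_zero]
      exact hI.proc i hni (by omega)
  · intro i hi
    have hne : i ≠ l := by omega
    rw [hmTsucc]
    by_cases hXi : c.X t ∈ c.Γ i
    · have hYi : c.Y t ∉ c.Γ i := c.Y_not_ixX hXi hne
      rw [if_pos hXi, if_neg hYi, hmX i hXi hne]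
      have hσb : c.sg i ≤ c.bV t (c.LL t) :=
        hge i (Finset.mem_erase.mpr ⟨hne, c.mem_ixF.mpr hXi⟩)
      have : c.A t ≤ 1 - c.bV t (c.LL t) := min_le_right _ _
      linarith
    · rw [if_neg hXi]
      by_cases hYi : c.Y t ∈ c.Γ i
      · rw [if_pos hYi, hmY i hYi hne]
        have hσh : c.sg i ≤ 1/2 := c.sg_half_of_Y hYi hne
        linarith [le_trans heb hbh]
      · rw [if_neg hYi]
        simp only [add_zero]
        exact hI.unproc i (by omega)
  · intro i hi
    have hne : i ≠ l := by omega
    rw [hcsucc]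
    by_cases hXi : c.X t ∈ c.Γ i
    · have hYi : c.Y t ∉ c.Γ i := c.Y_not_ixX hXi hne
      rw [if_pos hXi, if_neg hYi, hcX i hXi hne]
    · rw [if_neg hXi]
      by_cases hYi : c.Y t ∈ c.Γ i
      · rw [if_pos hYi, hcY i hYi hne]
      · rw [if_neg hYi]
        simpa using hI.cnt1 i (by omega)
  · rw [c.LL_succ]
    rw [List.pairwise_append]
    refine ⟨hI.colors, ?_, ?_⟩
    · rw [List.pairwise_cons]
      refine ⟨?_, by simp⟩
      intro e' he'
      simp only [List.mem_singleton] at he'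
      subst he'
      intro i hXi hYi
      by_cases hil : i = l
      · simp only [C1, C2]
        intro h
        have := add_left_cancel h
        simp at this
      · exact absurd hYi (c.Y_not_ixX hXi hil)
    · intro e he e' he'
      simp only [List.mem_cons, List.mem_singleton, List.not_mem_nil, or_false] at he'
      intro i hei he'i
      have hil : i = l := by
        by_contra hne
        rcases he' with rfl | rfl
        · exact c.X_fresh he hei hne he'i
        · exact c.Y_fresh he hei hne he'i
      subst hil
      have hcp : e.2.2 = c.cpC (c.LL t) l := c.cp_spec (hI.cnt1 l le_rfl) e he hei
      rcases he' with rfl | rfl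
      · simp only [C1]
        rw [hcp]
        intro h
        conv at h => lhs; rw [← add_zero (c.cpC (c.LL t) l)]
        have := add_left_cancel h
        simp at this
      · simp only [C2]
        rw [hcp]
        intro h
        conv at h => lhs; rw [← add_zero (c.cpC (c.LL t) l)]
        have := add_left_cancel h
        simp at this

lemma inv (t : ℕ) : c.Inv t := by
  induction t with
  | zero => exact c.inv_zero
  | succ t ih => exact c.inv_succ ih

end Ctx
namespace Ctx

variable {Ω : Type*} (c : Ctx Ω)

/-! #### Global structure of the entry list -/

lemma LL_mono {s t : ℕ} (hst : s ≤ t) {e} (he : e ∈ c.LL s) : e ∈ c.LL t := by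
  induction t with
  | zero => exact (Nat.le_zero.mp hst) ▸ he
  | succ t ih =>
    rcases Nat.lt_or_ge s (t+1) with h | h
    · rw [c.LL_succ]
      exact List.mem_append_left _ (ih (by omega))
    · have : s = t+1 := by omega
      exact this ▸ he

lemma X_entry_mem {s t : ℕ} (hst : s < t) : (c.X s, c.A s, c.C1 s) ∈ c.LL t := by
  apply c.LL_mono hst
  rw [c.LL_succ]
  simp

lemma Y_entry_mem {s t : ℕ} (hst : s < t) : (c.Y s, c.Ev s, c.C2 s) ∈ c.LL t := by
  apply c.LL_mono hst
  rw [c.LL_succ]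
  simp

lemma provenance {t : ℕ} {e} (he : e ∈ c.LL t) :
    ∃ s < t, e = (c.X s, c.A s, c.C1 s) ∨ e = (c.Y s, c.Ev s, c.C2 s) := by
  induction t with
  | zero => cases he
  | succ t ih =>
    rw [c.LL_succ] at he
    rcases List.mem_append.mp he with he | he
    · obtain ⟨s, hs, h⟩ := ih he
      exact ⟨s, by omega, h⟩
    · simp only [List.mem_cons, List.mem_singleton, List.not_mem_nil, or_false] at he
      exact ⟨t, by omega, he⟩

/-- Entry points are outside `G_n`. -/
lemma X_not_Gn (t : ℕ) : c.X t ∉ Gn c.Γ c.n := by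
  intro h
  simp only [Gn, Set.mem_iUnion, Set.mem_setOf_eq, exists_prop] at h
  obtain ⟨j, hj, hmem⟩ := h
  exact c.X_not_lt (by omega) hmem

lemma Y_not_Gn (t : ℕ) : c.Y t ∉ Gn c.Γ c.n := by
  intro h
  simp only [Gn, Set.mem_iUnion, Set.mem_setOf_eq, exists_prop] at h
  obtain ⟨j, hj, hmem⟩ := h
  exact c.Y_not_lt (by omega) hmem

/-- An entry point of step `s` lying in `Γ i` forces `n+1+s ≤ i`. -/
lemma X_step_le {s i : ℕ} (h : c.X s ∈ c.Γ i) : c.n+1+s ≤ i := by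
  by_contra hlt
  exact c.X_not_lt (by omega) h

lemma Y_step_le {s i : ℕ} (h : c.Y s ∈ c.Γ i) : c.n+1+s ≤ i := by
  by_contra hlt
  exact c.Y_not_lt (by omega) h

/-- Entry points of different steps are distinct. -/
lemma step_pts_ne {s t : ℕ} (hst : s < t) :
    c.X t ≠ c.X s ∧ c.X t ≠ c.Y s ∧ c.Y t ≠ c.X s ∧ c.Y t ≠ c.Y s := by
  have h1 : c.X t ∉ c.Γ (c.n+1+s) := c.X_not_lt (by omega)
  have h2 : c.Y t ∉ c.Γ (c.n+1+s) := c.Y_not_lt (by omega)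
  refine ⟨?_, ?_, ?_, ?_⟩ <;> intro h
  · exact h1 (h ▸ c.X_mem s)
  · exact h1 (h ▸ c.Y_mem s)
  · exact h2 (h ▸ c.X_mem s)
  · exact h2 (h ▸ c.Y_mem s)

/-! #### The extension function -/

lemma A_nonneg (t : ℕ) : 0 ≤ c.A t := (c.step_facts (c.inv t)).2.2.2.2.1
lemma A_le_one (t : ℕ) : c.A t ≤ 1 := (c.step_facts (c.inv t)).2.2.2.2.2.1
lemma Ev_nonneg (t : ℕ) : 0 ≤ c.Ev t := (c.step_facts (c.inv t)).2.2.2.2.2.2.2.1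
lemma Ev_le_one (t : ℕ) : c.Ev t ≤ 1 := by
  have h1 := (c.step_facts (c.inv t)).2.2.2.2.2.2.2.2.1
  have h2 := (c.step_facts (c.inv t)).2.2.2.1
  linarith

open Classical in
/-- The mass added at step `t`. -/
noncomputable def addf (t : ℕ) (g : Ω) : ℝ :=
  (if c.X t = g then c.A t else 0) + (if c.Y t = g then c.Ev t else 0)

/-- The total added mass. -/
noncomputable def v (g : Ω) : ℝ := ∑' t, c.addf t g

lemma addf_nonneg (t : ℕ) (g : Ω) : 0 ≤ c.addf t g := by
  classical
  unfold addf
  have := c.A_nonneg t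
  have := c.Ev_nonneg t
  split_ifs <;> simp_all <;> linarith

lemma addf_eq_zero {t : ℕ} {g : Ω} (h1 : c.X t ≠ g) (h2 : c.Y t ≠ g) :
    c.addf t g = 0 := by
  classical
  unfold addf
  rw [if_neg h1, if_neg h2, add_zero]

lemma addf_eq_zero_of_ne_step {t s : ℕ} {g : Ω} (hg : g = c.X t ∨ g = c.Y t)
    (hst : s ≠ t) : c.addf s g = 0 := by
  have hgmem : g ∈ c.Γ (c.n+1+t) := by
    rcases hg with rfl | rfl
    · exact c.X_mem t
    · exact c.Y_mem t
  rcases Nat.lt_or_ge s t with h | h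
  · -- s < t : the step-t points avoid Γ (n+1+s)
    apply c.addf_eq_zero
    · intro hx
      rcases hg with rfl | rfl
      · exact (c.step_pts_ne h).1 hx.symm
      · exact (c.step_pts_ne h).2.2.1 hx.symm
    · intro hy
      rcases hg with rfl | rfl
      · exact (c.step_pts_ne h).2.1 hy.symm
      · exact (c.step_pts_ne h).2.2.2 hy.symm
  · have h' : t < s := by omega
    apply c.addf_eq_zero
    · intro hx
      exact c.X_not_lt (j := c.n+1+t) (by omega) (hx ▸ hgmem)
    · intro hy
      exact c.Y_not_lt (j := c.n+1+t) (by omega) (hy ▸ hgmem)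

lemma v_eq_addf {t : ℕ} {g : Ω} (hg : g = c.X t ∨ g = c.Y t) :
    c.v g = c.addf t g :=
  tsum_eq_single t (fun s hs => c.addf_eq_zero_of_ne_step hg hs)

lemma v_eq_zero {g : Ω} (hg : ∀ t, g ≠ c.X t ∧ g ≠ c.Y t) : c.v g = 0 := by
  have hz : ∀ t, c.addf t g = 0 := fun t =>
    c.addf_eq_zero (fun h => (hg t).1 h.symm) (fun h => (hg t).2 h.symm)
  unfold v
  simp only [hz]
  exact tsum_zero

lemma v_nonneg (g : Ω) : 0 ≤ c.v g := by
  by_cases h : ∃ t, g = c.X t ∨ g = c.Y t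
  · obtain ⟨t, ht⟩ := h
    rw [c.v_eq_addf ht]
    exact c.addf_nonneg t g
  · push_neg at h
    rw [c.v_eq_zero (fun t => h t)]

lemma v_zero_on_Gn {g : Ω} (hg : g ∈ Gn c.Γ c.n) : c.v g = 0 := by
  apply c.v_eq_zero
  intro t
  constructor
  · intro h; exact (c.X_not_Gn t) (h ▸ hg)
  · intro h; exact (c.Y_not_Gn t) (h ▸ hg)

end Ctx
namespace Ctx

variable {Ω : Type*} (c : Ctx Ω)

/-! #### Summation of the extension over each `Γ i` -/

open Classical in
/-- Mass added by step `t` inside `Γ i`. -/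
noncomputable def kap (t i : ℕ) : ℝ :=
  (if c.X t ∈ c.Γ i then c.A t else 0) + (if c.Y t ∈ c.Γ i then c.Ev t else 0)

open Classical in
lemma hasSum_addf_subtype (t i : ℕ) :
    HasSum (fun g : c.Γ i => c.addf t g) (c.kap t i) := by
  have h1 := BirkhoffAux.hasSum_single_subtype (c.Γ i) (c.X t) (c.A t)
  have h2 := BirkhoffAux.hasSum_single_subtype (c.Γ i) (c.Y t) (c.Ev t)
  exact h1.add h2

lemma sum_kap (T i : ℕ) :
    ∑ t ∈ Finset.range T, c.kap t i = c.mTot (c.LL T) i := by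
  induction T with
  | zero => rw [show c.LL 0 = [] from rfl, c.mTot_nil]; simp
  | succ T ih =>
    rw [Finset.sum_range_succ, ih, c.LL_succ, c.mTot_append, c.mTot_pair]
    rfl

lemma addf_zero_off_range {i t : ℕ} (ht : i - c.n ≤ t) {g : Ω} (hg : g ∈ c.Γ i) :
    c.addf t g = 0 := by
  have hi : i < c.n+1+t := by omega
  apply c.addf_eq_zero
  · intro h; exact c.X_not_lt hi (h ▸ hg)
  · intro h; exact c.Y_not_lt hi (h ▸ hg)

lemma v_restrict (i : ℕ) {g : Ω} (hg : g ∈ c.Γ i) :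
    c.v g = ∑ t ∈ Finset.range (i - c.n), c.addf t g := by
  apply tsum_eq_sum
  intro t ht
  exact c.addf_zero_off_range (by simpa using ht) hg

lemma hasSum_v_subtype (i : ℕ) :
    HasSum (fun g : c.Γ i => c.v g) (c.mTot (c.LL (i - c.n)) i) := by
  have heq : (fun g : c.Γ i => c.v g) =
      (fun g : c.Γ i => ∑ t ∈ Finset.range (i - c.n), c.addf t g) := by
    funext g
    exact c.v_restrict i g.2
  rw [heq, ← c.sum_kap (i - c.n) i]
  exact hasSum_sum (fun t _ => c.hasSum_addf_subtype t i)

lemma mTot_final (i : ℕ) : c.sg i + c.mTot (c.LL (i - c.n)) i = 1 := by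
  rcases le_or_gt i c.n with h | h
  · have h0 : i - c.n = 0 := by omega
    rw [h0]
    have : c.LL 0 = [] := rfl
    rw [this, c.mTot_nil, add_zero]
    exact c.sg_eq_one h
  · exact (c.inv (i - c.n)).proc i h (by omega)

/-- The extended function has sum `1` over every `Γ i`. -/
lemma hasSum_ext (i : ℕ) :
    HasSum (fun g : c.Γ i => c.w g + c.v g) 1 := by
  have := (c.sg_hasSum i).add (c.hasSum_v_subtype i)
  rwa [c.mTot_final i] at this

end Ctx
namespace Ctx

variable {Ω : Type*} (c : Ctx Ω)

/-! #### Rigidity of the extension -/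

open Classical in
/-- The entry points relevant for `Γ i`. -/
noncomputable def Pfin (i : ℕ) : Finset Ω :=
  ((c.LL (i - c.n)).map (fun e => e.1)).toFinset

lemma mem_Pfin_X {t i : ℕ} (h : c.X t ∈ c.Γ i) : c.X t ∈ c.Pfin i := by
  classical
  have hle := c.X_step_le h
  have hmem : (c.X t, c.A t, c.C1 t) ∈ c.LL (i - c.n) := c.X_entry_mem (by omega)
  simp only [Pfin, List.mem_toFinset, List.mem_map]
  exact ⟨_, hmem, rfl⟩

lemma mem_Pfin_Y {t i : ℕ} (h : c.Y t ∈ c.Γ i) : c.Y t ∈ c.Pfin i := by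
  classical
  have hle := c.Y_step_le h
  have hmem : (c.Y t, c.Ev t, c.C2 t) ∈ c.LL (i - c.n) := c.Y_entry_mem (by omega)
  simp only [Pfin, List.mem_toFinset, List.mem_map]
  exact ⟨_, hmem, rfl⟩

lemma mem_Pfin_elim {g : Ω} {i : ℕ} (h : g ∈ c.Pfin i) :
    ∃ s < i - c.n, g = c.X s ∨ g = c.Y s := by
  classical
  simp only [Pfin, List.mem_toFinset, List.mem_map] at h
  obtain ⟨e, he, rfl⟩ := h
  obtain ⟨s, hs, h⟩ := c.provenance he
  refine ⟨s, hs, ?_⟩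
  rcases h with rfl | rfl
  · exact Or.inl rfl
  · exact Or.inr rfl

section Rigid

variable {u : Ω → ℝ}
variable (hU : ∀ k : ℕ, HasSum (fun g : c.Γ k => u g) 1)
variable (hG : ∀ g ∈ Gn c.Γ c.n, u g = c.w g)
variable (hZ : ∀ g, g ∉ Gn c.Γ c.n → c.w g + c.v g = 0 → u g = 0)

include hU hG hZ in
lemma key_eq (i : ℕ) :
    ∑ g ∈ c.Pfin i, (c.Γ i).indicator (fun g => u g - c.w g) g = 1 - c.sg i := by
  classical
  have h1 : HasSum (fun g : c.Γ i => u g - c.w g) (1 - c.sg i) :=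
    (hU i).sub (c.sg_hasSum i)
  have h2 : HasSum ((c.Γ i).indicator (fun g => u g - c.w g)) (1 - c.sg i) := by
    rw [← hasSum_subtype_iff_indicator]
    exact h1
  have h3 : ∀ g ∉ c.Pfin i, (c.Γ i).indicator (fun g => u g - c.w g) g = 0 := by
    intro g hg
    by_cases hgi : g ∈ c.Γ i
    · rw [Set.indicator_of_mem hgi]
      by_cases hGn : g ∈ Gn c.Γ c.n
      · rw [hG g hGn]; ring
      · have hweq : c.w g = 0 := c.hwG g hGn
        have hv : c.v g = 0 := by
          apply c.v_eq_zero
          intro s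
          constructor
          · rintro rfl
            exact hg (c.mem_Pfin_X hgi)
          · rintro rfl
            exact hg (c.mem_Pfin_Y hgi)
        rw [hZ g hGn (by rw [hweq, hv]; ring), hweq]
        ring
    · exact Set.indicator_of_notMem hgi _
  exact HasSum.unique (hasSum_sum_of_ne_finset_zero h3) h2

lemma key_eq_ext (i : ℕ) :
    ∑ g ∈ c.Pfin i, (c.Γ i).indicator (fun g => c.v g) g = 1 - c.sg i := by
  have h := c.key_eq (u := fun g => c.w g + c.v g)
    (fun k => c.hasSum_ext k)
    (fun g hg => by show c.w g + c.v g = c.w g; rw [c.v_zero_on_Gn hg]; ring)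
    (fun g _ h0 => h0) i
  simpa using h

include hU hG hZ in
lemma key_eq_diff (i : ℕ) :
    ∑ g ∈ c.Pfin i, (c.Γ i).indicator (fun g => u g - (c.w g + c.v g)) g = 0 := by
  classical
  have h1 := c.key_eq hU hG hZ i
  have h2 := c.key_eq_ext i
  have h3 : ∀ g ∈ c.Pfin i,
      (c.Γ i).indicator (fun g => u g - (c.w g + c.v g)) g =
        (c.Γ i).indicator (fun g => u g - c.w g) g -
        (c.Γ i).indicator (fun g => c.v g) g := by
    intro g _
    by_cases hgi : g ∈ c.Γ i
    · rw [Set.indicator_of_mem hgi, Set.indicator_of_mem hgi, Set.indicator_of_mem hgi]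
      ring
    · rw [Set.indicator_of_notMem hgi, Set.indicator_of_notMem hgi,
        Set.indicator_of_notMem hgi]
      ring
  rw [Finset.sum_congr rfl h3, Finset.sum_sub_distrib, h1, h2]
  ring

include hU hG hZ in
lemma rigid_aux : ∀ t : ℕ,
    u (c.X t) - (c.w (c.X t) + c.v (c.X t)) = 0 ∧
    u (c.Y t) - (c.w (c.Y t) + c.v (c.Y t)) = 0 := by
  classical
  intro t
  induction t using Nat.strong_induction_on with
  | _ t IH =>
  set l := c.n+1+t with hldef
  have hKE := c.key_eq_diff hU hG hZ
  -- value of the extension at the step-t points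
  have hwX : c.w (c.X t) + c.v (c.X t) =
      c.A t + (if c.Y t = c.X t then c.Ev t else 0) := by
    rw [c.hwG _ (c.X_not_Gn t), c.v_eq_addf (Or.inl rfl)]
    simp [addf]
  have hwY : c.w (c.Y t) + c.v (c.Y t) =
      (if c.X t = c.Y t then c.A t else 0) + c.Ev t := by
    rw [c.hwG _ (c.Y_not_Gn t), c.v_eq_addf (Or.inr rfl)]
    simp [addf]
  -- zero of the difference on earlier points
  have hZP : ∀ g ∈ c.Pfin l, g ≠ c.X t → g ≠ c.Y t →
      u g - (c.w g + c.v g) = 0 := by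
    intro g hg hgx hgy
    obtain ⟨s, hs, hcase⟩ := c.mem_Pfin_elim hg
    have hslt : s < t + 1 := by omega
    have hst : s < t := by
      rcases Nat.lt_or_ge s t with h | h
      · exact h
      · exfalso
        have : s = t := by omega
        subst this
        rcases hcase with rfl | rfl
        · exact hgx rfl
        · exact hgy rfl
    rcases hcase with rfl | rfl
    · exact (IH s hst).1
    · exact (IH s hst).2
  have hXPl : c.X t ∈ c.Pfin l := c.mem_Pfin_X (c.X_mem t)
  have hYPl : c.Y t ∈ c.Pfin l := c.mem_Pfin_Y (c.Y_mem t)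
  by_cases hxy : c.Y t = c.X t
  · -- the two step points coincide
    have hsum := hKE l
    rw [Finset.sum_eq_single_of_mem (c.X t) hXPl ?_] at hsum
    · have := Set.indicator_of_mem (c.X_mem t) (fun g => u g - (c.w g + c.v g))
      rw [this] at hsum
      exact ⟨hsum, by rw [hxy]; exact hsum⟩
    · intro b hb hne
      by_cases hbi : b ∈ c.Γ l
      · rw [Set.indicator_of_mem hbi]
        exact hZP b hb hne (fun h => hne (h.trans hxy))
      · exact Set.indicator_of_notMem hbi _
  · -- distinct step points
    by_cases hAB : c.dV t (c.LL t) ≤ 1 - c.bV t (c.LL t)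
    · -- case A : a = δ, e = 0
      have hAa : c.A t = c.dV t (c.LL t) := min_eq_left hAB
      have hEv : c.Ev t = 0 := by
        have h' : c.Ev t = c.dV t (c.LL t) - c.A t := rfl
        rw [h', hAa]; ring
      have hwY0 : c.w (c.Y t) + c.v (c.Y t) = 0 := by
        rw [hwY, if_neg (fun h => hxy h.symm), hEv]; ring
      have huY : u (c.Y t) = 0 := hZ _ (c.Y_not_Gn t) hwY0
      have hDfY : u (c.Y t) - (c.w (c.Y t) + c.v (c.Y t)) = 0 := by
        rw [huY, hwY0]; ring
      have hsum := hKE l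
      rw [Finset.sum_eq_single_of_mem (c.X t) hXPl ?_] at hsum
      · rw [Set.indicator_of_mem (c.X_mem t)] at hsum
        exact ⟨hsum, hDfY⟩
      · intro b hb hne
        by_cases hbi : b ∈ c.Γ l
        · rw [Set.indicator_of_mem hbi]
          by_cases hby : b = c.Y t
          · rw [hby]; exact hDfY
          · exact hZP b hb hne hby
        · exact Set.indicator_of_notMem hbi _
    · -- case B : a = 1 - b < δ
      have hblt : 1 - c.bV t (c.LL t) < c.dV t (c.LL t) := lt_of_not_ge hAB
      have hAa : c.A t = 1 - c.bV t (c.LL t) := min_eq_right (le_of_lt hblt)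
      have hδ1 : c.dV t (c.LL t) ≤ 1 := (c.step_facts (c.inv t)).2.1
      have hb0 : 0 < c.bV t (c.LL t) := by linarith
      have hbmem := Finset.max'_mem
        (insert (0:ℝ) (((c.ixF (c.xP t (c.LL t))).erase (c.n+1+t)).image c.sg))
        (Finset.insert_nonempty _ _)
      rcases Finset.mem_insert.mp hbmem with hb | hb
      · exfalso
        have : c.bV t (c.LL t) = 0 := hb
        linarith
      · obtain ⟨istar, histar, hsgstar⟩ := Finset.mem_image.mp hb
        have histar' := Finset.mem_erase.mp histar
        have hXi : c.X t ∈ c.Γ istar := c.mem_ixF.mp histar'.2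
        have hne : istar ≠ l := histar'.1
        have hgt : l < istar := lt_of_le_of_ne (c.X_step_le hXi) (Ne.symm hne)
        set sstar := istar - c.n - 1 with hsstardef
        have hss : c.n+1+sstar = istar := by omega
        have hts : t < sstar := by omega
        have hYnotistar : c.Y t ∉ c.Γ istar := c.Y_not_ixX hXi hne
        -- no other step touches Γ istar before sstar
        have hnot : ∀ r, r ≠ t → r < sstar → c.X r ∉ c.Γ istar ∧ c.Y r ∉ c.Γ istar := by
          intro r hrt hrs
          rcases Nat.lt_or_ge r t with hlt | hge
          · constructor
            · intro hmem
              exact c.X_fresh (c.X_entry_mem hlt) hmem hne hXi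
            · intro hmem
              exact c.X_fresh (c.Y_entry_mem hlt) hmem hne hXi
          · have htr : t < r := by omega
            have hner : istar ≠ c.n+1+r := by omega
            constructor
            · intro hmem
              exact c.X_fresh (c.X_entry_mem htr) hXi hner hmem
            · intro hmem
              exact c.Y_fresh (c.X_entry_mem htr) hXi hner hmem
        -- mass inside Γ istar before step sstar
        have hkap : ∀ r ∈ Finset.range sstar,
            c.kap r istar = if r = t then c.A t else 0 := by
          intro r hr
          rw [Finset.mem_range] at hr
          by_cases hrt : r = t
          · subst hrt
            rw [if_pos rfl]
            simp only [kap]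
            rw [if_pos hXi, if_neg hYnotistar, add_zero]
          · rw [if_neg hrt]
            obtain ⟨h1, h2⟩ := hnot r hrt hr
            simp only [kap]
            rw [if_neg h1, if_neg h2, add_zero]
        have hmTs : c.mTot (c.LL sstar) istar = c.A t := by
          rw [← c.sum_kap, Finset.sum_congr rfl hkap, Finset.sum_ite_eq' (Finset.range sstar)]
          rw [if_pos (Finset.mem_range.mpr hts)]
        have hbV : c.sg istar = c.bV t (c.LL t) := hsgstar
        have hδs : c.dV sstar (c.LL sstar) = 0 := by
          have h' : c.dV sstar (c.LL sstar) =
              1 - c.sg (c.n+1+sstar) - c.mTot (c.LL sstar) (c.n+1+sstar) := rfl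
          rw [h', hss, hmTs, hAa]
          linarith [hbV]
        have hbs : c.bV sstar (c.LL sstar) ≤ 1/2 := (c.step_facts (c.inv sstar)).2.2.2.1
        have hAs : c.A sstar = 0 := by
          have h' : c.A sstar = min (c.dV sstar (c.LL sstar)) (1 - c.bV sstar (c.LL sstar)) := rfl
          rw [h', hδs]
          exact min_eq_left (by linarith)
        have hEs : c.Ev sstar = 0 := by
          have h' : c.Ev sstar = c.dV sstar (c.LL sstar) - c.A sstar := rfl
          rw [h', hδs, hAs]; ring
        have hwXs : c.w (c.X sstar) + c.v (c.X sstar) = 0 := by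
          rw [c.hwG _ (c.X_not_Gn sstar), c.v_eq_addf (Or.inl rfl)]
          simp [addf, hAs, hEs]
        have hwYs : c.w (c.Y sstar) + c.v (c.Y sstar) = 0 := by
          rw [c.hwG _ (c.Y_not_Gn sstar), c.v_eq_addf (Or.inr rfl)]
          simp [addf, hAs, hEs]
        have hDfXs : u (c.X sstar) - (c.w (c.X sstar) + c.v (c.X sstar)) = 0 := by
          rw [hZ _ (c.X_not_Gn sstar) hwXs, hwXs]; ring
        have hDfYs : u (c.Y sstar) - (c.w (c.Y sstar) + c.v (c.Y sstar)) = 0 := by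
          rw [hZ _ (c.Y_not_Gn sstar) hwYs, hwYs]; ring
        have hXPi : c.X t ∈ c.Pfin istar := c.mem_Pfin_X hXi
        have hsum := hKE istar
        rw [Finset.sum_eq_single_of_mem (c.X t) hXPi ?_] at hsum
        · rw [Set.indicator_of_mem hXi] at hsum
          -- now the Y-point via the set Γ l
          have hsum2 := hKE l
          rw [Finset.sum_eq_single_of_mem (c.Y t) hYPl ?_] at hsum2
          · rw [Set.indicator_of_mem (c.Y_mem t)] at hsum2
            exact ⟨hsum, hsum2⟩
          · intro b hb hne'
            by_cases hbi : b ∈ c.Γ l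
            · rw [Set.indicator_of_mem hbi]
              by_cases hbx : b = c.X t
              · rw [hbx]; exact hsum
              · exact hZP b hb hbx hne'
            · exact Set.indicator_of_notMem hbi _
        · intro b hb hne'
          by_cases hbi : b ∈ c.Γ istar
          · rw [Set.indicator_of_mem hbi]
            obtain ⟨s, hsl, hcase⟩ := c.mem_Pfin_elim hb
            have hsl' : s ≤ sstar := by omega
            rcases Nat.lt_or_ge s t with hlt | hge
            · rcases hcase with rfl | rfl
              · exact (IH s hlt).1
              · exact (IH s hlt).2
            · by_cases hset : s = t
              · subst hset
                rcases hcase with rfl | rfl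
                · exact absurd rfl hne'
                · exact absurd hbi hYnotistar
              · by_cases hss' : s = sstar
                · subst hss'
                  rcases hcase with rfl | rfl
                  · exact hDfXs
                  · exact hDfYs
                · exfalso
                  have hslt : s < sstar := by omega
                  obtain ⟨h1, h2⟩ := hnot s hset hslt
                  rcases hcase with rfl | rfl
                  · exact h1 hbi
                  · exact h2 hbi
          · exact Set.indicator_of_notMem hbi _

include hU hG hZ in
/-- Rigidity: any element of `S(Γ)` agreeing with `w` on `G_n` and vanishing
where the extension vanishes (off `G_n`) coincides with the extension. -/
lemma rigid : ∀ g, u g = c.w g + c.v g := by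
  intro g
  by_cases hGn : g ∈ Gn c.Γ c.n
  · rw [hG g hGn, c.v_zero_on_Gn hGn, add_zero]
  · by_cases hpt : ∃ t, g = c.X t ∨ g = c.Y t
    · obtain ⟨t, ht⟩ := hpt
      have h := c.rigid_aux hU hG hZ t
      rcases ht with rfl | rfl
      · linarith [h.1]
      · linarith [h.2]
    · push_neg at hpt
      have hv : c.v g = 0 := c.v_eq_zero (fun t => hpt t)
      have hw : c.w g = 0 := c.hwG g hGn
      rw [hZ g hGn (by rw [hv, hw]; ring), hv, hw]
      ring

end Rigid

end Ctx
/-- A partial transversal's indicator lies in `P⁰(Γ)`. -/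
lemma indicator_mem_P0 {Ω : Type*} (Γ : ℕ → Set Ω) (A : Set Ω)
    (hA : ∀ i : ℕ, (A ∩ Γ i).Subsingleton) :
    A.indicator (fun _ => (1:ℝ)) ∈ P0Gamma Γ := by
  classical
  constructor
  · intro g
    by_cases hg : g ∈ A
    · right; rw [Set.indicator_of_mem hg]
    · left; rw [Set.indicator_of_notMem hg]
  · intro k
    by_cases hak : (A ∩ Γ k).Nonempty
    · obtain ⟨a, haA, hak'⟩ := hak
      refine ⟨1, le_rfl, ?_⟩
      have heq : (fun g : Γ k => A.indicator (fun _ => (1:ℝ)) g) =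
          (fun g : Γ k => if a = ↑g then (1:ℝ) else 0) := by
        funext g
        by_cases hg : (g : Ω) ∈ A
        · rw [Set.indicator_of_mem hg, if_pos (hA k ⟨haA, hak'⟩ ⟨hg, g.2⟩)]
        · rw [Set.indicator_of_notMem hg, if_neg]
          intro h
          exact hg (h ▸ haA)
      rw [heq]
      have := BirkhoffAux.hasSum_single_subtype (Γ k) a (1:ℝ)
      rwa [if_pos hak'] at this
    · refine ⟨0, by norm_num, ?_⟩
      have heq : (fun g : Γ k => A.indicator (fun _ => (1:ℝ)) g) = fun _ => (0:ℝ) := by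
        funext g
        rw [Set.indicator_of_notMem]
        intro hg
        exact hak ⟨g, hg, g.2⟩
      rw [heq]
      exact hasSum_zero

namespace Ctx

variable {Ω : Type*} (c : Ctx Ω)

/-- The color classes of entry points. -/
def Acl (cc : Fin 3) : Set Ω :=
  {g | ∃ t, (g = c.X t ∧ c.C1 t = cc) ∨ (g = c.Y t ∧ c.C2 t = cc)}

lemma Acl_transversal (cc : Fin 3) (i : ℕ) : (c.Acl cc ∩ c.Γ i).Subsingleton := by
  rintro g ⟨⟨t, hg⟩, hgi⟩ g' ⟨⟨t', hg'⟩, hgi'⟩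
  classical
  -- the corresponding entries
  set T := max t t' + 1 with hT
  have hent : ∃ e ∈ c.LL T, e.1 = g ∧ e.2.2 = cc := by
    rcases hg with ⟨rfl, hc⟩ | ⟨rfl, hc⟩
    · exact ⟨_, c.X_entry_mem (by omega), rfl, hc⟩
    · exact ⟨_, c.Y_entry_mem (by omega), rfl, hc⟩
  have hent' : ∃ e ∈ c.LL T, e.1 = g' ∧ e.2.2 = cc := by
    rcases hg' with ⟨rfl, hc⟩ | ⟨rfl, hc⟩
    · exact ⟨_, c.X_entry_mem (by omega), rfl, hc⟩
    · exact ⟨_, c.Y_entry_mem (by omega), rfl, hc⟩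
  obtain ⟨e, he, hep, hec⟩ := hent
  obtain ⟨e', he', hep', hec'⟩ := hent'
  by_cases hee : e = e'
  · rw [← hep, ← hep', hee]
  · exfalso
    have hsymm : Symmetric (fun (e e' : Ω × ℝ × Fin 3) =>
        ∀ i, e.1 ∈ c.Γ i → e'.1 ∈ c.Γ i → e.2.2 ≠ e'.2.2) := by
      intro a b h i hai hbi
      exact (h i hbi hai).symm
    haveI : Std.Symm (fun (e e' : Ω × ℝ × Fin 3) =>
        ∀ i, e.1 ∈ c.Γ i → e'.1 ∈ c.Γ i → e.2.2 ≠ e'.2.2) := ⟨fun a b h => hsymm h⟩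
    have := (c.inv T).colors.forall he he' hee i
      (by rw [hep]; exact hgi) (by rw [hep']; exact hgi')
    rw [hec, hec'] at this
    exact this rfl

lemma Acl_off_Gn (cc : Fin 3) : c.Acl cc ∩ Gn c.Γ c.n = ∅ := by
  ext g
  simp only [Set.mem_inter_iff, Set.mem_empty_iff_false, iff_false, not_and]
  rintro ⟨t, hg⟩ hGn
  rcases hg with ⟨rfl, _⟩ | ⟨rfl, _⟩
  · exact c.X_not_Gn t hGn
  · exact c.Y_not_Gn t hGn

lemma Acl_subset_union (cc : Fin 3) : c.Acl cc ⊆ ⋃ i : ℕ, c.Γ i := by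
  rintro g ⟨t, hg⟩
  rcases hg with ⟨rfl, _⟩ | ⟨rfl, _⟩
  · exact Set.mem_iUnion.mpr ⟨_, c.X_mem t⟩
  · exact Set.mem_iUnion.mpr ⟨_, c.Y_mem t⟩

lemma C1_ne_C2 (t : ℕ) : c.C1 t ≠ c.C2 t := by
  simp only [C1, C2]
  intro h
  have := add_left_cancel h
  simp at this

lemma v_le_ind (g : Ω) :
    c.v g ≤ (c.Acl 0).indicator (fun _ => (1:ℝ)) g +
      (c.Acl 1).indicator (fun _ => (1:ℝ)) g +
      (c.Acl 2).indicator (fun _ => (1:ℝ)) g := by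
  classical
  set f : Fin 3 → ℝ := fun cc => (c.Acl cc).indicator (fun _ => (1:ℝ)) g with hf
  have hnn : ∀ cc : Fin 3, 0 ≤ f cc := by
    intro cc
    exact Set.indicator_nonneg (fun _ _ => by norm_num) g
  have hmem : ∀ cc : Fin 3, g ∈ c.Acl cc → f cc = 1 := by
    intro cc h
    simp only [hf, Set.indicator_of_mem h]
  have hgoal : c.v g ≤ ∑ cc : Fin 3, f cc → c.v g ≤ f 0 + f 1 + f 2 := by
    intro h
    rwa [Fin.sum_univ_three] at h
  apply hgoal
  by_cases hpt : ∃ t, g = c.X t ∨ g = c.Y t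
  · obtain ⟨t, ht⟩ := hpt
    rw [c.v_eq_addf ht]
    have hA1 := c.A_le_one t
    have hE1 := c.Ev_le_one t
    have hA0 := c.A_nonneg t
    have hE0 := c.Ev_nonneg t
    simp only [addf]
    by_cases hX : c.X t = g <;> by_cases hY : c.Y t = g
    · rw [if_pos hX, if_pos hY]
      have h1 : f (c.C1 t) = 1 := hmem _ ⟨t, Or.inl ⟨hX.symm, rfl⟩⟩
      have h2 : f (c.C2 t) = 1 := hmem _ ⟨t, Or.inr ⟨hY.symm, rfl⟩⟩
      have hne := c.C1_ne_C2 t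
      have hpair : f (c.C1 t) + f (c.C2 t) ≤ ∑ cc : Fin 3, f cc := by
        rw [← Finset.sum_pair hne]
        exact Finset.sum_le_sum_of_subset_of_nonneg (Finset.subset_univ _)
          (fun i _ _ => hnn i)
      linarith
    · rw [if_pos hX, if_neg hY, add_zero]
      have h1 : f (c.C1 t) = 1 := hmem _ ⟨t, Or.inl ⟨hX.symm, rfl⟩⟩
      have hone : f (c.C1 t) ≤ ∑ cc : Fin 3, f cc :=
        Finset.single_le_sum (fun i _ => hnn i) (Finset.mem_univ _)
      linarith
    · rw [if_neg hX, if_pos hY, zero_add]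
      have h2 : f (c.C2 t) = 1 := hmem _ ⟨t, Or.inr ⟨hY.symm, rfl⟩⟩
      have hone : f (c.C2 t) ≤ ∑ cc : Fin 3, f cc :=
        Finset.single_le_sum (fun i _ => hnn i) (Finset.mem_univ _)
      linarith
    · exfalso
      rcases ht with rfl | rfl
      · exact hX rfl
      · exact hY rfl
  · push_neg at hpt
    rw [c.v_eq_zero (fun t => hpt t)]
    exact Finset.sum_nonneg (fun i _ => hnn i)

end Ctx
/-- Main extension lemma: any `w` as in `S_n⁰(Γ)` extends to an element of
`S(Γ)`, with control on the extension and rigidity. -/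
lemma exists_extension {Ω : Type*} (Γ : ℕ → Set Ω) (ha : CondA Γ)
    (m n : ℕ) (hmn : m < n)
    (ha22 : ∀ k > m, ∀ K : Finset ℕ, k ∉ K → ¬ Γ k ⊆ ⋃ j ∈ K, Γ j)
    (w : Ω → ℝ)
    (hw0 : ∀ g, 0 ≤ w g) (hwG : ∀ g ∉ Gn Γ n, w g = 0)
    (hw1 : ∀ k ≤ n, HasSum (fun g : Γ k => w g) 1)
    (hwle : ∀ k > n, ∃ s : ℝ, s ≤ 1 ∧ HasSum (fun g : Γ k => w g) s) :
    ∃ v : Ω → ℝ,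
      (∀ g ∈ Gn Γ n, v g = 0) ∧
      (∀ g, 0 ≤ v g) ∧
      (∀ k : ℕ, HasSum (fun g : Γ k => w g + v g) 1) ∧
      (∃ A B C : Set Ω,
        (∀ i, (A ∩ Γ i).Subsingleton) ∧ (∀ i, (B ∩ Γ i).Subsingleton) ∧
        (∀ i, (C ∩ Γ i).Subsingleton) ∧
        A ∩ Gn Γ n = ∅ ∧ B ∩ Gn Γ n = ∅ ∧ C ∩ Gn Γ n = ∅ ∧
        A ⊆ ⋃ i, Γ i ∧ B ⊆ ⋃ i, Γ i ∧ C ⊆ ⋃ i, Γ i ∧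
        ∀ g, v g ≤ A.indicator (fun _ => (1:ℝ)) g + B.indicator (fun _ => (1:ℝ)) g +
          C.indicator (fun _ => (1:ℝ)) g) ∧
      (∀ u : Ω → ℝ, (∀ k : ℕ, HasSum (fun g : Γ k => u g) 1) →
        (∀ g ∈ Gn Γ n, u g = w g) →
        (∀ g, g ∉ Gn Γ n → w g + v g = 0 → u g = 0) →
        u = fun g => w g + v g) := by
  classical
  -- summability of `w`
  have hindsum : ∀ k ≤ n, Summable ((Γ k).indicator w) := by
    intro k hk
    have := (hw1 k hk).summable
    rwa [← summable_subtype_iff_indicator]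
  have hSum : Summable w := by
    have hbig : Summable (fun g => ∑ k ∈ Finset.range (n+1), (Γ k).indicator w g) := by
      apply summable_sum
      intro k hk
      exact (hindsum k (Nat.lt_succ_iff.mp (Finset.mem_range.mp hk))).congr (fun _ => rfl)
    apply Summable.of_nonneg_of_le hw0 _ hbig
    intro g
    by_cases hg : g ∈ Gn Γ n
    · simp only [Gn, Set.mem_iUnion, Set.mem_setOf_eq, exists_prop] at hg
      obtain ⟨k, hk, hgk⟩ := hg
      have hterm : w g = (Γ k).indicator w g := (Set.indicator_of_mem hgk w).symm
      rw [hterm]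
      apply Finset.single_le_sum (f := fun k => (Γ k).indicator w g)
        (fun i _ => Set.indicator_nonneg (fun x _ => hw0 x) g)
        (Finset.mem_range.mpr (by omega))
    · rw [hwG g hg]
      exact Finset.sum_nonneg (fun i _ => Set.indicator_nonneg (fun x _ => hw0 x) g)
  -- the exceptional finite index set
  obtain ⟨F, hF⟩ := BirkhoffAux.exists_tail_finset hSum hw0 (by norm_num : (0:ℝ) < 1/2)
  set D : Finset ℕ := F.biUnion (fun g => (ha g).toFinset) with hD
  have hDspec : ∀ i : ℕ, 1/2 < (∑' g : Γ i, w g) → i ∈ D := by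
    intro i hi
    by_contra hiD
    have hnone : ∀ g ∈ F, g ∉ Γ i := by
      intro g hgF hgi
      apply hiD
      rw [hD]
      apply Finset.mem_biUnion.mpr
      exact ⟨g, hgF, (ha g).mem_toFinset.mpr hgi⟩
    have := hF (Γ i) hnone
    linarith
  have hσle : ∀ i : ℕ, (∑' g : Γ i, w g) ≤ 1 := by
    intro i
    rcases le_or_gt i n with h | h
    · rw [(hw1 i h).tsum_eq]
    · obtain ⟨s, hs, hhs⟩ := hwle i h
      rw [hhs.tsum_eq]
      exact hs
  set c : Ctx Ω :=
    { Γ := Γ, ha := ha, m := m, n := n, ha22 := ha22, hmn := hmn, w := w,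
      hw0 := hw0, hwG := hwG, hσ1 := hw1, hσle := hσle, hSum := hSum,
      D := D, hD := hDspec } with hc
  refine ⟨c.v, ?_, c.v_nonneg, c.hasSum_ext, ?_, ?_⟩
  · intro g hg
    exact c.v_zero_on_Gn hg
  · exact ⟨c.Acl 0, c.Acl 1, c.Acl 2,
      c.Acl_transversal 0, c.Acl_transversal 1, c.Acl_transversal 2,
      c.Acl_off_Gn 0, c.Acl_off_Gn 1, c.Acl_off_Gn 2,
      c.Acl_subset_union 0, c.Acl_subset_union 1, c.Acl_subset_union 2,
      c.v_le_ind⟩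
  · intro u hU hG hZ
    funext g
    exact c.rigid hU hG hZ g
section Eta

open scoped ENNReal

variable {Ω : Type*} (Γ : ℕ → Set Ω) (ha : CondA Γ) (W : Set (Ω → ℝ))
  (hP0 : P0Gamma Γ ⊆ W) (w' : Ω → ℝ) (hw' : w' ∈ Wdual W)

/-- Partial transversals avoiding `G_n`. -/
def PT (n : ℕ) : Set (Set Ω) :=
  {A | (∀ i : ℕ, (A ∩ Γ i).Subsingleton) ∧ A ∩ Gn Γ n = ∅ ∧ A ⊆ ⋃ i : ℕ, Γ i}

/-- The tail quantity `η_n`. -/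
noncomputable def eta (n : ℕ) : ℝ≥0∞ :=
  ⨆ A : PT Γ n, ∑' g : (A : Set Ω), ENNReal.ofReal |w' g|

lemma Gn_mono {n n' : ℕ} (h : n ≤ n') : Gn Γ n ⊆ Gn Γ n' := by
  intro g hg
  simp only [Gn, Set.mem_iUnion, Set.mem_setOf_eq, exists_prop] at hg ⊢
  obtain ⟨k, hk, hgk⟩ := hg
  exact ⟨k, by omega, hgk⟩

lemma eta_antitone : Antitone (eta Γ w') := by
  intro n n' h
  apply iSup_le
  rintro ⟨A, hA1, hA2, hA3⟩
  have : A ∈ PT Γ n := ⟨hA1, by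
    apply Set.eq_empty_of_subset_empty
    rw [← hA2]
    exact Set.inter_subset_inter_right A (Gn_mono Γ h), hA3⟩
  exact le_iSup (fun B : PT Γ n => ∑' g : (B : Set Ω), ENNReal.ofReal |w' g|) ⟨A, this⟩

lemma le_eta {n : ℕ} {A : Set Ω} (hA : A ∈ PT Γ n) :
    (∑' g : A, ENNReal.ofReal |w' g|) ≤ eta Γ w' n :=
  le_iSup (fun B : PT Γ n => ∑' g : (B : Set Ω), ENNReal.ofReal |w' g|) ⟨A, hA⟩

include ha hP0 hw' in
/-- Key limit : `η_n → 0`. -/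
lemma eta_tendsto_zero : Filter.Tendsto (eta Γ w') Filter.atTop (nhds 0) := by
  classical
  have htend := tendsto_atTop_iInf (eta_antitone Γ w')
  suffices hinf : ⨅ n, eta Γ w' n = 0 by rwa [hinf] at htend
  by_contra hne
  have hpos : 0 < ⨅ n, eta Γ w' n := pos_iff_ne_zero.mpr hne
  set ε : ℝ≥0∞ := min (⨅ n, eta Γ w' n) 1 with hε
  have hε0 : 0 < ε := lt_min hpos (by norm_num)
  have hεtop : ε ≠ ⊤ := by
    apply ne_top_of_le_ne_top _ (min_le_right _ _)
    norm_num
  set δ : ℝ≥0∞ := ε / 2 with hδ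
  have hδε : δ < ε := ENNReal.half_lt_self hε0.ne' hεtop
  have hδ0 : 0 < δ := ENNReal.half_pos hε0.ne'
  have hδtop : δ ≠ ⊤ := by
    rw [hδ]
    exact (ENNReal.div_lt_top hεtop (by norm_num)).ne
  set δr : ℝ := δ.toReal with hδr
  have hδr0 : 0 < δr := ENNReal.toReal_pos hδ0.ne' hδtop
  -- at every level we can find a finite piece of mass at least `δr`
  have hstep : ∀ N : ℕ, ∃ FS : Finset Ω,
      (∀ i : ℕ, ((FS : Set Ω) ∩ Γ i).Subsingleton) ∧
      (∀ g ∈ FS, g ∉ Gn Γ N) ∧ (∀ g ∈ FS, ∃ i, g ∈ Γ i) ∧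
      δr ≤ ∑ g ∈ FS, |w' g| := by
    intro N
    have hlt : δ < eta Γ w' N := lt_of_lt_of_le hδε
      (le_trans (min_le_left _ _) (iInf_le _ N))
    rw [eta, lt_iSup_iff] at hlt
    obtain ⟨⟨A, hA1, hA2, hA3⟩, hAlt⟩ := hlt
    rw [ENNReal.tsum_eq_iSup_sum, lt_iSup_iff] at hAlt
    obtain ⟨s, hs⟩ := hAlt
    refine ⟨s.image Subtype.val, ?_, ?_, ?_, ?_⟩
    · intro i
      intro g hg g' hg'
      apply hA1 i
      · refine ⟨?_, hg.2⟩
        obtain ⟨g0, _, rfl⟩ := Finset.mem_image.mp (by exact_mod_cast hg.1)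
        exact g0.2
      · refine ⟨?_, hg'.2⟩
        obtain ⟨g0, _, rfl⟩ := Finset.mem_image.mp (by exact_mod_cast hg'.1)
        exact g0.2
    · intro g hg
      obtain ⟨g0, _, rfl⟩ := Finset.mem_image.mp hg
      intro hmem
      have : (g0 : Ω) ∈ A ∩ Gn Γ N := ⟨g0.2, hmem⟩
      rw [Set.eq_empty_iff_forall_notMem] at hA2
      exact hA2 _ this
    · intro g hg
      obtain ⟨g0, _, rfl⟩ := Finset.mem_image.mp hg
      have := hA3 g0.2
      simpa [Set.mem_iUnion] using this
    · have heq : ∑ g ∈ s.image Subtype.val, ENNReal.ofReal |w' g| =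
          ∑ g ∈ s, ENNReal.ofReal |w' (g : Ω)| := by
        rw [Finset.sum_image]
        intro a _ b _ hab
        exact Subtype.ext hab
      have hlt2 : δ < ∑ g ∈ s.image Subtype.val, ENNReal.ofReal |w' g| := by
        rw [heq]; exact hs
      have hofreal : ∑ g ∈ s.image Subtype.val, ENNReal.ofReal |w' g| =
          ENNReal.ofReal (∑ g ∈ s.image Subtype.val, |w' g|) := by
        rw [ENNReal.ofReal_sum_of_nonneg]
        intro i _
        exact abs_nonneg _
      rw [hofreal] at hlt2
      have := (ENNReal.toReal_lt_toReal hδtop ENNReal.ofReal_ne_top).mpr hlt2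
      rw [ENNReal.toReal_ofReal (Finset.sum_nonneg (fun i _ => abs_nonneg _))] at this
      exact le_of_lt this
  -- iterate, always above the sets seen so far
  set FSf : ℕ → Finset Ω := fun N => (hstep N).choose with hFSf
  set Nf : Finset Ω → ℕ := fun S => (S.biUnion fun g => (ha g).toFinset).sup id with hNf
  set G : ℕ → Finset Ω := fun k => Nat.rec (∅ : Finset Ω)
    (fun _ S => S ∪ FSf (Nf S + 1)) k with hG
  have hGsucc : ∀ k, G (k+1) = G k ∪ FSf (Nf (G k) + 1) := fun k => rfl
  have hidx : ∀ (S : Finset Ω) (g : Ω), g ∈ S → ∀ i, g ∈ Γ i → i ≤ Nf S := by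
    intro S g hg i hi
    apply Finset.le_sup (f := id)
    apply Finset.mem_biUnion.mpr
    exact ⟨g, hg, (ha g).mem_toFinset.mpr hi⟩
  -- invariants
  have hinv : ∀ k : ℕ, (∀ g ∈ G k, ∃ i, g ∈ Γ i) ∧
      (∀ i : ℕ, ((G k : Set Ω) ∩ Γ i).Subsingleton) ∧
      (k : ℝ) * δr ≤ ∑ g ∈ G k, |w' g| := by
    intro k
    induction k with
    | zero =>
      have h0 : G 0 = ∅ := rfl
      refine ⟨?_, ?_, ?_⟩
      · intro g hg; rw [h0] at hg; cases hg
      · intro i g hg g' hg'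
        exfalso
        rw [h0] at hg
        simpa using hg.1
      · simp [h0]
    | succ k ih =>
      obtain ⟨ih1, ih2, ih3⟩ := ih
      obtain ⟨hF1, hF2, hF3, hF4⟩ := (hstep (Nf (G k) + 1)).choose_spec
      have hdisj : ∀ g ∈ G k, g ∉ FSf (Nf (G k) + 1) := by
        intro g hg hgF
        obtain ⟨i, hi⟩ := ih1 g hg
        have hle := hidx (G k) g hg i hi
        apply hF2 g hgF
        simp only [Gn, Set.mem_iUnion, Set.mem_setOf_eq, exists_prop]
        exact ⟨i, by omega, hi⟩
      have hGnotF : ∀ g ∈ G k, ∀ i, g ∈ Γ i → ∀ g' ∈ FSf (Nf (G k) + 1), g' ∉ Γ i := by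
        intro g hg i hi g' hg' hg'i
        obtain ⟨j, hj⟩ := ih1 g hg
        have hle := hidx (G k) g hg i hi
        apply hF2 g' hg'
        simp only [Gn, Set.mem_iUnion, Set.mem_setOf_eq, exists_prop]
        exact ⟨i, by omega, hg'i⟩
      refine ⟨?_, ?_, ?_⟩
      · intro g hg
        rw [hGsucc, Finset.mem_union] at hg
        rcases hg with hg | hg
        · exact ih1 g hg
        · exact hF3 g hg
      · intro i g hgmem g' hg'mem
        rw [hGsucc] at hgmem hg'mem
        have hgm := hgmem
        have hg'm := hg'mem
        obtain ⟨hgU, hgi⟩ := hgmem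
        obtain ⟨hg'U, hg'i⟩ := hg'mem
        rw [Finset.coe_union, Set.mem_union] at hgU hg'U
        rcases hgU with hgU | hgU <;> rcases hg'U with hg'U | hg'U
        · exact ih2 i ⟨hgU, hgi⟩ ⟨hg'U, hg'i⟩
        · exact absurd hg'i (hGnotF g (by exact_mod_cast hgU) i hgi g' (by exact_mod_cast hg'U))
        · exact absurd hgi (hGnotF g' (by exact_mod_cast hg'U) i hg'i g (by exact_mod_cast hgU))
        · exact hF1 i ⟨hgU, hgi⟩ ⟨hg'U, hg'i⟩
      · rw [hGsucc, Finset.sum_union (Finset.disjoint_left.mpr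
          (fun g hg hgF => hdisj g hg hgF))]
        push_cast
        have : ∑ g ∈ G k, |w' g| + δr ≤ ∑ g ∈ G k, |w' g| + ∑ g ∈ FSf (Nf (G k) + 1), |w' g| := by
          linarith [hF4]
        linarith
  -- the union is a partial transversal pairing infinitely with `w'`
  set B : Set Ω := ⋃ k, (G k : Set Ω) with hB
  have hGmono : ∀ j k, j ≤ k → G j ⊆ G k := by
    intro j k hjk
    induction k with
    | zero => have : j = 0 := by omega
              rw [this]
    | succ k ih =>
      rcases Nat.lt_or_ge j (k+1) with h | h
      · rw [hGsucc]
        exact (ih (by omega)).trans Finset.subset_union_left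
      · have : j = k+1 := by omega
        rw [this]
  have hBpt : ∀ i : ℕ, (B ∩ Γ i).Subsingleton := by
    intro i g hg g' hg'
    obtain ⟨hgB, hgi⟩ := hg
    obtain ⟨hg'B, hg'i⟩ := hg'
    rw [hB, Set.mem_iUnion] at hgB hg'B
    obtain ⟨j, hj⟩ := hgB
    obtain ⟨j', hj'⟩ := hg'B
    have h1 : g ∈ G (max j j') := hGmono j _ (le_max_left _ _) (by exact_mod_cast hj)
    have h2 : g' ∈ G (max j j') := hGmono j' _ (le_max_right _ _) (by exact_mod_cast hj')
    exact (hinv (max j j')).2.1 i ⟨h1, hgi⟩ ⟨h2, hg'i⟩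
  have hBW : B.indicator (fun _ => (1:ℝ)) ∈ W := hP0 (indicator_mem_P0 Γ B hBpt)
  have hsummB := hw' _ hBW
  have hub : ∀ k : ℕ, (k : ℝ) * δr ≤ ∑' g, |B.indicator (fun _ => (1:ℝ)) g * w' g| := by
    intro k
    have h1 := (hinv k).2.2
    have h2 : ∑ g ∈ G k, |w' g| = ∑ g ∈ G k, |B.indicator (fun _ => (1:ℝ)) g * w' g| := by
      apply Finset.sum_congr rfl
      intro g hg
      have hgB : g ∈ B := Set.mem_iUnion.mpr ⟨k, by exact_mod_cast hg⟩
      rw [Set.indicator_of_mem hgB, one_mul]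
    rw [h2] at h1
    exact h1.trans (Summable.sum_le_tsum _ (fun g _ => abs_nonneg _) hsummB)
  obtain ⟨k, hk⟩ := exists_nat_gt ((∑' g, |B.indicator (fun _ => (1:ℝ)) g * w' g|) / δr)
  have := hub k
  rw [div_lt_iff₀ hδr0] at hk
  linarith

end Eta
lemma Gamma_subset_Gn {Ω : Type*} (Γ : ℕ → Set Ω) {k n : ℕ} (h : k ≤ n) :
    Γ k ⊆ Gn Γ n := by
  intro g hg
  simp only [Gn, Set.mem_iUnion, Set.mem_setOf_eq, exists_prop]
  exact ⟨k, h, hg⟩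
open scoped ENNReal in
/-- Lemma 3.1: the extension operators `T_n`. -/
theorem stmt16 {Ω : Type*} [Countable Ω] (Γ : ℕ → Set Ω)
    (hinf : {S : Set Ω | ∃ k, Γ k = S}.Infinite)
    (ha : CondA Γ) (h12 : Cond12 Γ)
    (W : Submodule ℝ (Ω → ℝ)) (hW : CondW (W : Set (Ω → ℝ)))
    (hP0 : P0Gamma Γ ⊆ (W : Set (Ω → ℝ)))
    (m : ℕ)
    (ha22 : ∀ k > m, ∀ K : Finset ℕ, k ∉ K → ¬ Γ k ⊆ ⋃ j ∈ K, Γ j) :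
    ∃ T : ℕ → (Ω → ℝ) → (Ω → ℝ),
      (∀ n > m, ∀ w ∈ Sn0 Γ (W : Set (Ω → ℝ)) n,
        (∀ g ∈ Gn Γ n, T n w g = w g) ∧ T n w ∈ SGamma Γ ∩ (W : Set (Ω → ℝ))) ∧
      (∀ n > m, ∀ w ∈ Set.extremePoints ℝ (Sn0 Γ (W : Set (Ω → ℝ)) n),
        T n w ∈ Set.extremePoints ℝ (SGamma Γ ∩ (W : Set (Ω → ℝ)))) ∧
      (∀ w' ∈ Wdual (W : Set (Ω → ℝ)),
        Filter.Tendsto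
          (fun n : ℕ => sSup {x : ℝ | ∃ w ∈ Sn0 Γ (W : Set (Ω → ℝ)) n,
            x = ∑' g : Ω, (w g - T n w g) * w' g})
          Filter.atTop (nhds 0)) := by
  classical
  have hext : ∀ n : ℕ, ∀ w : Ω → ℝ, m < n → w ∈ Sn0 Γ (W : Set (Ω → ℝ)) n →
      ∃ v : Ω → ℝ,
      (∀ g ∈ Gn Γ n, v g = 0) ∧
      (∀ g, 0 ≤ v g) ∧
      (∀ k : ℕ, HasSum (fun g : Γ k => w g + v g) 1) ∧
      (∃ A B C : Set Ω,
        (∀ i, (A ∩ Γ i).Subsingleton) ∧ (∀ i, (B ∩ Γ i).Subsingleton) ∧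
        (∀ i, (C ∩ Γ i).Subsingleton) ∧
        A ∩ Gn Γ n = ∅ ∧ B ∩ Gn Γ n = ∅ ∧ C ∩ Gn Γ n = ∅ ∧
        A ⊆ ⋃ i, Γ i ∧ B ⊆ ⋃ i, Γ i ∧ C ⊆ ⋃ i, Γ i ∧
        ∀ g, v g ≤ A.indicator (fun _ => (1:ℝ)) g + B.indicator (fun _ => (1:ℝ)) g +
          C.indicator (fun _ => (1:ℝ)) g) ∧
      (∀ u : Ω → ℝ, (∀ k : ℕ, HasSum (fun g : Γ k => u g) 1) →
        (∀ g ∈ Gn Γ n, u g = w g) →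
        (∀ g, g ∉ Gn Γ n → w g + v g = 0 → u g = 0) →
        u = fun g => w g + v g) :=
    fun n w hmn hw =>
      exists_extension Γ ha m n hmn ha22 w hw.1 hw.2.1 hw.2.2.1 hw.2.2.2.1
  set T : ℕ → (Ω → ℝ) → (Ω → ℝ) := fun n w =>
    if h : m < n ∧ w ∈ Sn0 Γ (W : Set (Ω → ℝ)) n then
      fun g => w g + (hext n w h.1 h.2).choose g
    else w with hTdef
  have hTpos : ∀ n (w : Ω → ℝ) (h1 : m < n) (h2 : w ∈ Sn0 Γ (W : Set (Ω → ℝ)) n),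
      T n w = fun g => w g + (hext n w h1 h2).choose g := by
    intro n w h1 h2
    rw [hTdef]
    exact dif_pos ⟨h1, h2⟩
  -- property (1)
  have key1 : ∀ n > m, ∀ w ∈ Sn0 Γ (W : Set (Ω → ℝ)) n,
      (∀ g ∈ Gn Γ n, T n w g = w g) ∧ T n w ∈ SGamma Γ ∩ (W : Set (Ω → ℝ)) := by
    intro n hn w hw
    obtain ⟨hv0, hvnn, hvsum, ⟨A, B, C, hApt, hBpt, hCpt, hAe, hBe, hCe,
      hAu, hBu, hCu, hdom⟩, hrig⟩ := (hext n w hn hw).choose_spec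
    set v : Ω → ℝ := (hext n w hn hw).choose with hv
    have hTw : T n w = fun g => w g + v g := hTpos n w hn hw
    have hAW : A.indicator (fun _ => (1:ℝ)) ∈ W := hP0 (indicator_mem_P0 Γ A hApt)
    have hBW : B.indicator (fun _ => (1:ℝ)) ∈ W := hP0 (indicator_mem_P0 Γ B hBpt)
    have hCW : C.indicator (fun _ => (1:ℝ)) ∈ W := hP0 (indicator_mem_P0 Γ C hCpt)
    have hsumW : (fun g => A.indicator (fun _ => (1:ℝ)) g + B.indicator (fun _ => (1:ℝ)) g +
        C.indicator (fun _ => (1:ℝ)) g) ∈ W :=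
      W.add_mem (W.add_mem hAW hBW) hCW
    have hvW : v ∈ W := by
      apply hW _ hsumW
      intro g
      have hA0 : 0 ≤ A.indicator (fun _ => (1:ℝ)) g :=
        Set.indicator_nonneg (fun _ _ => zero_le_one) g
      have hB0 : 0 ≤ B.indicator (fun _ => (1:ℝ)) g :=
        Set.indicator_nonneg (fun _ _ => zero_le_one) g
      have hC0 : 0 ≤ C.indicator (fun _ => (1:ℝ)) g :=
        Set.indicator_nonneg (fun _ _ => zero_le_one) g
      have h1 : 0 ≤ A.indicator (fun _ => (1:ℝ)) g + B.indicator (fun _ => (1:ℝ)) g +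
          C.indicator (fun _ => (1:ℝ)) g := by linarith
      rw [abs_of_nonneg (hvnn g), abs_of_nonneg h1]
      exact hdom g
    refine ⟨?_, ?_, ?_⟩
    · intro g hg
      rw [hTw]
      simp only
      rw [hv0 g hg, add_zero]
    · rw [hTw]
      exact ⟨fun g => add_nonneg (hw.1 g) (hvnn g), hvsum⟩
    · rw [hTw]
      exact W.add_mem hw.2.2.2.2 hvW
  refine ⟨T, key1, ?_, ?_⟩
  · -- property (2) : extreme points
    intro n hn w hwex
    have hw : w ∈ Sn0 Γ (W : Set (Ω → ℝ)) n := hwex.1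
    obtain ⟨hv0, hvnn, hvsum, ⟨A, B, C, hApt, hBpt, hCpt, hAe, hBe, hCe,
      hAu, hBu, hCu, hdom⟩, hrig⟩ := (hext n w hn hw).choose_spec
    set v : Ω → ℝ := (hext n w hn hw).choose with hv
    have hTw : T n w = fun g => w g + v g := hTpos n w hn hw
    rw [mem_extremePoints]
    refine ⟨(key1 n hn w hw).2, ?_⟩
    intro u1 hu1 u2 hu2 hseg
    obtain ⟨a, b, ha0, hb0, hab, hcomb⟩ := hseg
    have hcombg : ∀ g, a * u1 g + b * u2 g = w g + v g := by
      intro g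
      have := congrFun hcomb g
      rw [hTw] at this
      simpa using this
    have hz : ∀ g, w g + v g = 0 → u1 g = 0 ∧ u2 g = 0 := by
      intro g h0
      have h1 := hu1.1.1 g
      have h2 := hu2.1.1 g
      have := hcombg g
      constructor <;> nlinarith
    -- restrictions to G_n lie in Sn0
    have hrestr : ∀ u : Ω → ℝ, u ∈ SGamma Γ ∩ (W : Set (Ω → ℝ)) →
        (Gn Γ n).indicator u ∈ Sn0 Γ (W : Set (Ω → ℝ)) n := by
      intro u hu
      refine ⟨?_, ?_, ?_, ?_, ?_⟩
      · intro g
        exact Set.indicator_nonneg (fun x _ => hu.1.1 x) g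
      · intro g hg
        exact Set.indicator_of_notMem hg u
      · intro k hk
        have heq : (fun g : Γ k => (Gn Γ n).indicator u g) = fun g : Γ k => u g := by
          funext g
          exact Set.indicator_of_mem (Gamma_subset_Gn Γ hk g.2) u
        rw [heq]
        exact hu.1.2 k
      · intro k _
        have hsummu : Summable (fun g : Γ k => u g) := (hu.1.2 k).summable
        have hle : ∀ g : Γ k, (Gn Γ n).indicator u g ≤ u g := by
          intro g
          exact Set.indicator_le_self' (fun x _ => hu.1.1 x) (g : Ω)
        have hnn : ∀ g : Γ k, 0 ≤ (Gn Γ n).indicator u g := by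
          intro g
          exact Set.indicator_nonneg (fun x _ => hu.1.1 x) _
        have hsumm' : Summable (fun g : Γ k => (Gn Γ n).indicator u g) :=
          Summable.of_nonneg_of_le hnn hle hsummu
        refine ⟨∑' g : Γ k, (Gn Γ n).indicator u g, ?_, hsumm'.hasSum⟩
        calc ∑' g : Γ k, (Gn Γ n).indicator u g ≤ ∑' g : Γ k, u g :=
              Summable.tsum_le_tsum hle hsumm' hsummu
        _ = 1 := (hu.1.2 k).tsum_eq
      · apply hW u hu.2
        intro g
        by_cases hg : g ∈ Gn Γ n
        · rw [Set.indicator_of_mem hg]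
        · rw [Set.indicator_of_notMem hg, abs_zero]
          exact abs_nonneg _
    have hu1' := hrestr u1 hu1
    have hu2' := hrestr u2 hu2
    have hwseg : w ∈ openSegment ℝ ((Gn Γ n).indicator u1) ((Gn Γ n).indicator u2) := by
      refine ⟨a, b, ha0, hb0, hab, ?_⟩
      funext g
      simp only [Pi.add_apply, Pi.smul_apply, smul_eq_mul]
      by_cases hg : g ∈ Gn Γ n
      · rw [Set.indicator_of_mem hg, Set.indicator_of_mem hg]
        have h1 := hcombg g
        have h2 : v g = 0 := hv0 g hg
        linarith
      · rw [Set.indicator_of_notMem hg, Set.indicator_of_notMem hg,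
          hw.2.1 g hg]
        ring
    obtain ⟨he1, he2⟩ := (mem_extremePoints.mp hwex).2 _ hu1' _ hu2' hwseg
    have hfix : ∀ u : Ω → ℝ, u ∈ SGamma Γ ∩ (W : Set (Ω → ℝ)) →
        (Gn Γ n).indicator u = w → (∀ g, w g + v g = 0 → u g = 0) → u = T n w := by
      intro u hu hind hzz
      rw [hTw]
      apply hrig u hu.1.2
      · intro g hg
        rw [← hind]
        exact (Set.indicator_of_mem hg u).symm
      · intro g _ h0
        exact hzz g h0
    constructor
    · exact hfix u1 hu1 he1 (fun g h0 => (hz g h0).1)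
    · exact hfix u2 hu2 he2 (fun g h0 => (hz g h0).2)
  · -- property (3) : the correction vanishes asymptotically
    intro w' hw'
    have hetat := eta_tendsto_zero Γ ha (W : Set (Ω → ℝ)) hP0 w' hw'
    have h3tend : Filter.Tendsto (fun n => 3 * eta Γ w' n) Filter.atTop (nhds 0) := by
      have := ENNReal.Tendsto.const_mul (a := 3) hetat (Or.inr (by norm_num))
      simpa using this
    have hbtend : Filter.Tendsto (fun n => (3 * eta Γ w' n).toReal) Filter.atTop (nhds 0) := by
      have hcont := ENNReal.tendsto_toReal (a := 0) (by simp)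
      have h2 := hcont.comp h3tend
      rw [ENNReal.toReal_zero] at h2
      exact h2
    apply squeeze_zero_norm' _ hbtend
    have hev1 : ∀ᶠ n : ℕ in Filter.atTop, m < n := Filter.eventually_gt_atTop m
    filter_upwards [hev1, hetat.eventually_lt_const (show (0:ℝ≥0∞) < ⊤ by norm_num)]
      with n hn hlt
    set S : Set ℝ := {x : ℝ | ∃ w ∈ Sn0 Γ (W : Set (Ω → ℝ)) n,
      x = ∑' g : Ω, (w g - T n w g) * w' g} with hS
    have h3top : 3 * eta Γ w' n ≠ ⊤ := by
      apply ENNReal.mul_ne_top (by norm_num) hlt.ne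
    have hbnn : 0 ≤ (3 * eta Γ w' n).toReal := ENNReal.toReal_nonneg
    have hxbound : ∀ x ∈ S, |x| ≤ (3 * eta Γ w' n).toReal := by
      rintro x ⟨w, hwS, rfl⟩
      obtain ⟨hv0, hvnn, hvsum, ⟨A, B, C, hApt, hBpt, hCpt, hAe, hBe, hCe,
        hAu, hBu, hCu, hdom⟩, hrig⟩ := (hext n w hn hwS).choose_spec
      set v : Ω → ℝ := (hext n w hn hwS).choose with hv
      have hTw : T n w = fun g => w g + v g := hTpos n w hn hwS
      have hAW : A.indicator (fun _ => (1:ℝ)) ∈ W := hP0 (indicator_mem_P0 Γ A hApt)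
      have hBW : B.indicator (fun _ => (1:ℝ)) ∈ W := hP0 (indicator_mem_P0 Γ B hBpt)
      have hCW : C.indicator (fun _ => (1:ℝ)) ∈ W := hP0 (indicator_mem_P0 Γ C hCpt)
      have hsA : Summable (fun g => |A.indicator (fun _ => (1:ℝ)) g * w' g|) := hw' _ hAW
      have hsB : Summable (fun g => |B.indicator (fun _ => (1:ℝ)) g * w' g|) := hw' _ hBW
      have hsC : Summable (fun g => |C.indicator (fun _ => (1:ℝ)) g * w' g|) := hw' _ hCW
      set φ : Ω → ℝ := fun g => |A.indicator (fun _ => (1:ℝ)) g * w' g| +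
        |B.indicator (fun _ => (1:ℝ)) g * w' g| + |C.indicator (fun _ => (1:ℝ)) g * w' g|
        with hφ
      have hφs : Summable φ := (hsA.add hsB).add hsC
      have hle : ∀ g, |(w g - T n w g) * w' g| ≤ φ g := by
        intro g
        rw [hTw]
        simp only
        have h1 : w g - (w g + v g) = -v g := by ring
        rw [h1, abs_mul, abs_neg, abs_of_nonneg (hvnn g)]
        have h2 : v g * |w' g| ≤ (A.indicator (fun _ => (1:ℝ)) g +
            B.indicator (fun _ => (1:ℝ)) g + C.indicator (fun _ => (1:ℝ)) g) * |w' g| :=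
          mul_le_mul_of_nonneg_right (hdom g) (abs_nonneg _)
        have h3 : ∀ (U : Set Ω), |U.indicator (fun _ => (1:ℝ)) g * w' g| =
            U.indicator (fun _ => (1:ℝ)) g * |w' g| := by
          intro U
          rw [abs_mul, abs_of_nonneg (Set.indicator_nonneg (fun _ _ => zero_le_one) g)]
        rw [hφ]
        simp only [h3]
        linarith
      have habs : Summable (fun g => |(w g - T n w g) * w' g|) :=
        Summable.of_nonneg_of_le (fun g => abs_nonneg _) hle hφs
      have hsumm : Summable (fun g => (w g - T n w g) * w' g) := habs.of_abs
      have hstep1 : |∑' g : Ω, (w g - T n w g) * w' g| ≤ ∑' g, φ g := by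
        calc |∑' g : Ω, (w g - T n w g) * w' g| ≤ ∑' g, |(w g - T n w g) * w' g| := by
              have hnorm : Summable fun g => ‖(w g - T n w g) * w' g‖ := by
                simpa only [Real.norm_eq_abs] using habs
              have hh := norm_tsum_le_tsum_norm hnorm
              simpa only [Real.norm_eq_abs] using hh
        _ ≤ ∑' g, φ g := Summable.tsum_le_tsum hle habs hφs
      -- bound each transversal piece by η
      have hpiece : ∀ (U : Set Ω), (∀ i : ℕ, (U ∩ Γ i).Subsingleton) →
          U ∩ Gn Γ n = ∅ → U ⊆ ⋃ i, Γ i →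
          (U.indicator (fun _ => (1:ℝ)) ∈ (W : Set (Ω → ℝ))) →
          ENNReal.ofReal (∑' g, |U.indicator (fun _ => (1:ℝ)) g * w' g|) ≤ eta Γ w' n := by
        intro U hUpt hUe hUu hUW
        have hsU : Summable (fun g => |U.indicator (fun _ => (1:ℝ)) g * w' g|) := hw' _ hUW
        rw [ENNReal.ofReal_tsum_of_nonneg (fun g => abs_nonneg _) hsU]
        have heq : ∀ g : Ω, ENNReal.ofReal |U.indicator (fun _ => (1:ℝ)) g * w' g| =
            U.indicator (fun g => ENNReal.ofReal |w' g|) g := by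
          intro g
          by_cases hg : g ∈ U
          · rw [Set.indicator_of_mem hg, Set.indicator_of_mem hg, one_mul]
          · rw [Set.indicator_of_notMem hg, Set.indicator_of_notMem hg, zero_mul,
              abs_zero, ENNReal.ofReal_zero]
        calc ∑' g, ENNReal.ofReal |U.indicator (fun _ => (1:ℝ)) g * w' g|
            = ∑' g, U.indicator (fun g => ENNReal.ofReal |w' g|) g := by
              apply tsum_congr heq
        _ = ∑' g : U, ENNReal.ofReal |w' g| := (tsum_subtype U _).symm
        _ ≤ eta Γ w' n := le_eta Γ w' ⟨hUpt, hUe, hUu⟩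
      have hofreal : ENNReal.ofReal |∑' g : Ω, (w g - T n w g) * w' g| ≤ 3 * eta Γ w' n := by
        calc ENNReal.ofReal |∑' g : Ω, (w g - T n w g) * w' g|
            ≤ ENNReal.ofReal (∑' g, φ g) := ENNReal.ofReal_le_ofReal hstep1
        _ = ENNReal.ofReal ((∑' g, |A.indicator (fun _ => (1:ℝ)) g * w' g|) +
              (∑' g, |B.indicator (fun _ => (1:ℝ)) g * w' g|) +
              (∑' g, |C.indicator (fun _ => (1:ℝ)) g * w' g|)) := by
              rw [hφ]
              congr 1
              rw [Summable.tsum_add (hsA.add hsB) hsC, Summable.tsum_add hsA hsB]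
        _ ≤ ENNReal.ofReal (∑' g, |A.indicator (fun _ => (1:ℝ)) g * w' g|) +
              ENNReal.ofReal (∑' g, |B.indicator (fun _ => (1:ℝ)) g * w' g|) +
              ENNReal.ofReal (∑' g, |C.indicator (fun _ => (1:ℝ)) g * w' g|) :=
              le_trans (ENNReal.ofReal_add_le) (add_le_add_left ENNReal.ofReal_add_le _)
        _ ≤ eta Γ w' n + eta Γ w' n + eta Γ w' n := by
              gcongr
              · exact hpiece A hApt hAe hAu hAW
              · exact hpiece B hBpt hBe hBu hBW
              · exact hpiece C hCpt hCe hCu hCW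
        _ = 3 * eta Γ w' n := by ring
      have := ENNReal.toReal_mono h3top hofreal
      rwa [ENNReal.toReal_ofReal (abs_nonneg _)] at this
    rcases Set.eq_empty_or_nonempty S with hSe | hSne
    · rw [hSe, Real.sSup_empty]
      simpa using hbnn
    · have hub : ∀ x ∈ S, x ≤ (3 * eta Γ w' n).toReal :=
        fun x hx => (abs_le.mp (hxbound x hx)).2
      have hbdd : BddAbove S := ⟨(3 * eta Γ w' n).toReal, fun x hx => hub x hx⟩
      obtain ⟨x0, hx0⟩ := hSne
      have hlb : -(3 * eta Γ w' n).toReal ≤ sSup S :=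
        le_trans (abs_le.mp (hxbound x0 hx0)).1 (le_csSup hbdd hx0)
      have hub' : sSup S ≤ (3 * eta Γ w' n).toReal := Real.sSup_le hub hbnn
      rw [Real.norm_eq_abs]
      exact abs_le.mpr ⟨hlb, hub'⟩

end Birkhoff
end

section
/- Let Γ be an infinite family of pairwise disjoint sets Ω_k with #Ω_k = k for each k ∈ ℕ, and let w₀ ∈ S(Γ) be the function equal to 1/k at every point of Ω_k. Then: (i) every finite convex combination w of elements of P(Γ) satisfies sup_j #{g ∈ Ω_j : w(g) ≠ 0} < ∞; and (ii) for every finite convex combination w of elements of P(Γ), sup_j Σ_{g∈Ω_j} |w₀(g) − w(g)| ≥ 1; consequently w₀ does not belong to the closure of the convex hull of P(Γ) in the norm ‖w‖_S := sup_j Σ_{g∈Ω_j} |w(g)|. -/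
open Filter

namespace Birkhoff

variable {Ω ι : Type*}

private lemma pg_subsingleton {Ω ι : Type*} {Γ : ι → Set Ω} {p : Ω → ℝ}
    (hp : p ∈ PGamma Γ) (j : ι) :
    {g : Ω | g ∈ Γ j ∧ p g ≠ 0}.Subsingleton := by
  classical
  intro a ha b hb
  by_contra hab
  have hs := hp.1.2 j
  have hpa : p a = 1 := (hp.2 a).resolve_left ha.2
  have hpb : p b = 1 := (hp.2 b).resolve_left hb.2
  have hle : (∑ g ∈ ({⟨a, ha.1⟩, ⟨b, hb.1⟩} : Finset (Γ j)), p g) ≤ 1 :=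
    sum_le_hasSum _ (fun g _ => hp.1.1 g) hs
  rw [Finset.sum_pair (by simpa using hab)] at hle
  rw [hpa, hpb] at hle; norm_num at hle

/-- Remark 3.7. -/
theorem stmt19 {Ω : Type*} [Countable Ω] (Γ : ℕ+ → Set Ω)
    (hdisj : Pairwise (Function.onFun Disjoint Γ))
    (hcover : ⋃ k : ℕ+, Γ k = Set.univ)
    (hsize : ∀ k : ℕ+, (Γ k).encard = (k : ℕ))
    (w₀ : Ω → ℝ) (hw₀ : ∀ k : ℕ+, ∀ g ∈ Γ k, w₀ g = 1 / ((k : ℕ) : ℝ))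
    (hw₀S : w₀ ∈ SGamma Γ) :
    (∀ w ∈ convexHull ℝ (PGamma Γ),
      ∃ C : ℕ, ∀ j : ℕ+, ({g : Ω | g ∈ Γ j ∧ w g ≠ 0}).ncard ≤ C) ∧
    (∀ w ∈ convexHull ℝ (PGamma Γ),
      (1 : ℝ) ≤ ⨆ j : ℕ+, ∑' g : Γ j, |w₀ g - w g|) ∧
    ¬ ∃ ws : ℕ → Ω → ℝ, (∀ n, ws n ∈ convexHull ℝ (PGamma Γ)) ∧
      Filter.Tendsto (fun n => ⨆ j : ℕ+, ∑' g : Γ j, |w₀ g - ws n g|)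
        Filter.atTop (nhds 0) := by
  classical
  have hfin : ∀ j : ℕ+, (Γ j).Finite := fun j => Set.finite_of_encard_eq_coe (hsize j)
  -- key structural facts about convex combinations
  have key : ∀ w ∈ convexHull ℝ (PGamma Γ),
      ∃ C : ℕ, (∀ j : ℕ+, ({g : Ω | g ∈ Γ j ∧ w g ≠ 0}).ncard ≤ C) ∧
        (∀ j : ℕ+, HasSum (fun g : Γ j => w g) 1) ∧ (∀ g, 0 ≤ w g) := by
    intro w hw
    rw [convexHull_eq] at hw
    obtain ⟨ι', t, a, z, ha, hsum, hz, rfl⟩ := hw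
    have hcm : ∀ g : Ω, t.centerMass a z g = ∑ i ∈ t, a i * z i g := by
      intro g
      rw [Finset.centerMass_eq_of_sum_1 _ _ hsum]
      simp [Finset.sum_apply]
    refine ⟨t.card, ?_, ?_, ?_⟩
    · intro j
      have hex : ∀ g ∈ {g : Ω | g ∈ Γ j ∧ t.centerMass a z g ≠ 0},
          ∃ i, i ∈ t ∧ z i g ≠ 0 := by
        intro g hg
        have h0 : ∑ i ∈ t, a i * z i g ≠ 0 := by rw [← hcm g]; exact hg.2
        obtain ⟨i, hi, hne⟩ := Finset.exists_ne_zero_of_sum_ne_zero h0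
        exact ⟨i, hi, fun h => hne (by rw [h, mul_zero])⟩
      have ht : t.Nonempty := Finset.nonempty_of_ne_empty (by rintro rfl; simp at hsum)
      obtain ⟨i₀, hi₀⟩ := ht
      set F : Ω → ι' := fun g => if h : ∃ i, i ∈ t ∧ z i g ≠ 0 then h.choose else i₀ with hF
      have hFspec : ∀ g ∈ {g : Ω | g ∈ Γ j ∧ t.centerMass a z g ≠ 0},
          F g ∈ t ∧ z (F g) g ≠ 0 := by
        intro g hg
        have h := hex g hg
        rw [hF]
        simp only [dif_pos h]
        exact h.choose_spec
      have hle := Set.ncard_le_ncard_of_injOn F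
        (t := (↑t : Set ι')) (fun g hg => (hFspec g hg).1) ?_ t.finite_toSet
      · simpa [Set.ncard_coe_finset] using hle
      · intro g₁ h₁ g₂ h₂ hFe
        have s1 := hFspec g₁ h₁
        have s2 := hFspec g₂ h₂
        refine pg_subsingleton (hz _ s1.1) j ⟨h₁.1, s1.2⟩ ⟨h₂.1, ?_⟩
        rw [hFe]; exact s2.2
    · intro j
      have h1 : HasSum (fun g : Γ j => ∑ i ∈ t, a i * z i ↑g) (∑ i ∈ t, a i * 1) :=
        hasSum_sum fun i hi => ((hz i hi).1.2 j).mul_left (a i)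
      simp only [mul_one, hsum] at h1
      convert h1 using 1
      funext g; exact hcm g
    · intro g
      rw [hcm g]
      exact Finset.sum_nonneg fun i hi => mul_nonneg (ha i hi) ((hz i hi).1.1 g)
  -- Part (ii)
  have part2 : ∀ w ∈ convexHull ℝ (PGamma Γ),
      (1 : ℝ) ≤ ⨆ j : ℕ+, ∑' g : Γ j, |w₀ g - w g| := by
    intro w hw
    obtain ⟨C, hC, hws, hwnn⟩ := key w hw
    set T : ℕ+ → ℝ := fun j => ∑' g : Γ j, |w₀ g - w g| with hT
    have hncard : ∀ j : ℕ+, (Γ j).ncard = (j : ℕ) := by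
      intro j
      rw [Set.ncard_def, hsize j]
      rfl
    have hTb : ∀ j, T j ≤ 2 := by
      intro j
      haveI := (hfin j).fintype
      have e1 : ∑ g : Γ j, w₀ ↑g = 1 := ((hasSum_fintype _).unique (hw₀S.2 j))
      have e2 : ∑ g : Γ j, w ↑g = 1 := ((hasSum_fintype _).unique (hws j))
      calc T j = ∑ g : Γ j, |w₀ ↑g - w ↑g| := tsum_fintype _
        _ ≤ ∑ g : Γ j, (w₀ ↑g + w ↑g) := Finset.sum_le_sum fun g _ => by
            have h1 := hw₀S.1 (g : Ω); have h2 := hwnn (g : Ω)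
            exact abs_le.mpr ⟨by linarith, by linarith⟩
        _ = 2 := by rw [Finset.sum_add_distrib, e1, e2]; norm_num
    have hbdd : BddAbove (Set.range T) := ⟨2, by rintro x ⟨j, rfl⟩; exact hTb j⟩
    have hlow : ∀ j : ℕ+, ((j : ℕ) - (C : ℝ)) / (j : ℕ) ≤ T j := by
      intro j
      haveI := (hfin j).fintype
      have hjpos : (0 : ℝ) < ((j : ℕ) : ℝ) := by exact_mod_cast j.pos
      set N := (Finset.univ.filter fun g : Γ j => w ↑g ≠ 0).card with hN
      set Z := (Finset.univ.filter fun g : Γ j => w ↑g = 0).card with hZ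
      have hNZ : Z + N = (j : ℕ) := by
        rw [← hncard j, Set.ncard_eq_toFinset_card', Set.toFinset_card, ← Finset.card_univ,
          ← Finset.card_filter_add_card_filter_not (fun g : Γ j => w ↑g = 0)]
      have hNC : N ≤ C := by
        have h1 := hC j
        have heq : {g : Ω | g ∈ Γ j ∧ w g ≠ 0} = Subtype.val '' {g : Γ j | w ↑g ≠ 0} := by
          ext g
          constructor
          · rintro ⟨hg, hne⟩; exact ⟨⟨g, hg⟩, hne, rfl⟩
          · rintro ⟨⟨g', hg'⟩, hne, rfl⟩; exact ⟨hg', hne⟩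
        rw [heq, Set.ncard_image_of_injective _ Subtype.val_injective,
          Set.ncard_eq_toFinset_card'] at h1
        simpa [Set.toFinset_setOf, hN] using h1
      have hZge : ((j : ℕ) : ℝ) - (C : ℝ) ≤ (Z : ℝ) := by
        have h1 : ((Z : ℝ) + N) = ((j : ℕ) : ℝ) := by exact_mod_cast hNZ
        have h2 : (N : ℝ) ≤ (C : ℝ) := by exact_mod_cast hNC
        linarith
      calc ((j : ℕ) - (C : ℝ)) / (j : ℕ) ≤ (Z : ℝ) * (1 / (j : ℕ)) := by
            rw [div_eq_mul_one_div]
            exact mul_le_mul_of_nonneg_right hZge (by positivity)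
        _ = ∑ g : Γ j, (if w ↑g = 0 then 1 / ((j : ℕ) : ℝ) else 0) := by
            rw [Finset.sum_ite, Finset.sum_const, Finset.sum_const_zero, add_zero, hZ,
              nsmul_eq_mul]
        _ ≤ ∑ g : Γ j, |w₀ ↑g - w ↑g| := by
            refine Finset.sum_le_sum fun g _ => ?_
            by_cases h : w ↑g = 0
            · rw [if_pos h, h, sub_zero, hw₀ j ↑g g.2, abs_of_nonneg (by positivity)]
            · rw [if_neg h]; exact abs_nonneg _
        _ = T j := (tsum_fintype _).symm
    have hsup : ∀ n : ℕ, (((n : ℝ) + 1) - (C : ℝ)) / ((n : ℝ) + 1) ≤ ⨆ j : ℕ+, T j := by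
      intro n
      refine le_trans ?_ (le_ciSup hbdd (⟨n + 1, n.succ_pos⟩ : ℕ+))
      have h := hlow ⟨n + 1, n.succ_pos⟩
      exact Eq.trans_le (by norm_num) h
    have hlim : Filter.Tendsto (fun n : ℕ => (((n : ℝ) + 1) - (C : ℝ)) / ((n : ℝ) + 1))
        Filter.atTop (nhds 1) := by
      have h1 : Filter.Tendsto (fun n : ℕ => 1 - (C : ℝ) * (1 / ((n : ℝ) + 1)))
          Filter.atTop (nhds (1 - (C : ℝ) * 0)) :=
        tendsto_const_nhds.sub (tendsto_one_div_add_atTop_nhds_zero_nat.const_mul _)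
      rw [mul_zero, sub_zero] at h1
      refine h1.congr fun n => ?_
      have hn : ((n : ℝ) + 1) ≠ 0 := by positivity
      field_simp
    exact le_of_tendsto' hlim hsup
  refine ⟨fun w hw => ⟨(key w hw).choose, (key w hw).choose_spec.1⟩, part2, ?_⟩
  rintro ⟨ws, hmem, htend⟩
  have h1 : ∀ n, (1 : ℝ) ≤ ⨆ j : ℕ+, ∑' g : Γ j, |w₀ g - ws n g| :=
    fun n => part2 (ws n) (hmem n)
  have := ge_of_tendsto' htend h1
  linarith


end Birkhoff
end
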